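/- There is a constant C, independent of h, k, n, epsilon^n and e^n, such that |(1/3)[(epsilon^n, P[(rho^{n,2})_x]) + ((1 + H^n) e^n, P_0[(r^{n,2})_x])] + (P[(rho^n)_x], P[(rho^{n,1})_x]) + ((1 + H^n) P_0[(r^n)_x], P_0[(r^{n,1})_x])| <= (C / h^2) (||epsilon^n||^2 + ||e^n||^2). -/

import Mathlib

open MeasureTheory Set

noncomputable section

/-- The L²(0,1) inner product. -/
def ip (f g : ℝ → ℝ) : ℝ := ∫ x in (0:ℝ)..1, f x * g x

/-- The L²(0,1) norm. -/
def L2 (f : ℝ → ℝ) : ℝ := Real.sqrt (ip f f)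

/-- The L^∞(0,1) norm. -/
def Linf (f : ℝ → ℝ) : ℝ := sSup ((fun x => |f x|) '' Icc (0:ℝ) 1)

/-- The H^s(0,1) Sobolev norm. -/
def Hs (s : ℕ) (f : ℝ → ℝ) : ℝ :=
  Real.sqrt (∑ j ∈ Finset.range (s + 1), (L2 (iteratedDeriv j f)) ^ 2)

/-- The W^{s,∞}(0,1) norm. -/
def Winf (s : ℕ) (f : ℝ → ℝ) : ℝ := ∑ j ∈ Finset.range (s + 1), Linf (iteratedDeriv j f)

/-- A quasiuniform partition of [0,1] with maximal mesh length `h` and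
quasiuniformity constant `c`. -/
structure Disc (c : ℝ) where
  N : ℕ
  pt : Fin (N + 2) → ℝ
  h : ℝ
  h_pos : 0 < h
  mono : StrictMono pt
  left : pt 0 = 0
  right : pt (Fin.last (N + 1)) = 1
  len_le : ∀ i : Fin (N + 1), pt i.succ - pt i.castSucc ≤ h
  quasi : ∀ i : Fin (N + 1), c * h ≤ pt i.succ - pt i.castSucc

/-- The finite element space S_h of C^μ piecewise polynomials of degree ≤ r-1. -/
def Sp (r μ : ℕ) {c : ℝ} (D : Disc c) : Set (ℝ → ℝ) :=
  {φ | ContDiffOn ℝ μ φ (Icc 0 1) ∧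
    ∀ i : Fin (D.N + 1), ∃ p : Polynomial ℝ, p.natDegree ≤ r - 1 ∧
      ∀ t ∈ Icc (D.pt i.castSucc) (D.pt i.succ), φ t = p.eval t}

/-- The finite element space S_{h,0} with zero boundary conditions. -/
def Sp0 (r μ : ℕ) {c : ℝ} (D : Disc c) : Set (ℝ → ℝ) :=
  {φ | φ ∈ Sp r μ D ∧ φ 0 = 0 ∧ φ 1 = 0}

/-- `P` is the L²(0,1)-orthogonal projection onto `S`. -/
def IsL2Proj (S : Set (ℝ → ℝ)) (P : (ℝ → ℝ) → (ℝ → ℝ)) : Prop :=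
  (∀ v, P v ∈ S) ∧ (∀ v χ, χ ∈ S → ip (fun x => v x - P v x) χ = 0) ∧
  (∀ χ ∈ S, P χ = χ)

/-- The projection bounds (2.3a)-(2.3c). -/
def ProjBounds (P : (ℝ → ℝ) → (ℝ → ℝ)) (r : ℕ) (h Cp : ℝ) : Prop :=
  (∀ v, DifferentiableOn ℝ v (Icc 0 1) → Hs 1 (P v) ≤ Cp * Hs 1 v) ∧
  (∀ v, ContinuousOn v (Icc 0 1) → Linf (P v) ≤ Cp * Linf v) ∧
  (∀ v, ContDiffOn ℝ r v (Icc 0 1) → Linf (fun x => P v x - v x) ≤ Cp * h ^ r * Winf r v)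

/-- The projection bounds (2.3a)-(2.3c) for functions vanishing at the endpoints. -/
def ProjBounds0 (P0 : (ℝ → ℝ) → (ℝ → ℝ)) (r : ℕ) (h Cp : ℝ) : Prop :=
  (∀ v, DifferentiableOn ℝ v (Icc 0 1) → v 0 = 0 → v 1 = 0 → Hs 1 (P0 v) ≤ Cp * Hs 1 v) ∧
  (∀ v, ContinuousOn v (Icc 0 1) → v 0 = 0 → v 1 = 0 → Linf (P0 v) ≤ Cp * Linf v) ∧
  (∀ v, ContDiffOn ℝ r v (Icc 0 1) → v 0 = 0 → v 1 = 0 →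
      Linf (fun x => P0 v x - v x) ≤ Cp * h ^ r * Winf r v)

/-- The approximation property (2.1a). -/
def ApproxProp (S : Set (ℝ → ℝ)) (r : ℕ) (h Ca : ℝ) : Prop :=
  ∀ s : ℕ, 2 ≤ s → s ≤ r → ∀ w : ℝ → ℝ, ContDiffOn ℝ s w (Icc 0 1) →
    ∃ χ ∈ S, L2 (fun x => w x - χ x) + h * L2 (fun x => deriv w x - deriv χ x)
      ≤ Ca * h ^ s * L2 (iteratedDeriv s w)

/-- The approximation property (2.1a) for functions vanishing at the endpoints. -/
def ApproxProp0 (S : Set (ℝ → ℝ)) (r : ℕ) (h Ca : ℝ) : Prop :=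
  ∀ s : ℕ, 2 ≤ s → s ≤ r → ∀ w : ℝ → ℝ, ContDiffOn ℝ s w (Icc 0 1) → w 0 = 0 → w 1 = 0 →
    ∃ χ ∈ S, L2 (fun x => w x - χ x) + h * L2 (fun x => deriv w x - deriv χ x)
      ≤ Ca * h ^ s * L2 (iteratedDeriv s w)

/-- The inverse inequalities (2.2). -/
def InvIneq (S : Set (ℝ → ℝ)) (μ : ℕ) (h Ci : ℝ) : Prop :=
  ∀ χ ∈ S,
    (∀ a b : ℕ, b ≤ a → a ≤ μ + 1 → Hs a χ ≤ Ci / h ^ (a - b) * Hs b χ) ∧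
    (∀ j : ℕ, j ≤ μ → Winf j χ ≤ Ci / (h ^ j * Real.sqrt h) * L2 χ)

/-- `(η, u)` is a (sufficiently) smooth solution of the shallow water system on
`[0,1] × [0,T]`, with `1 + η ≥ α` there and homogeneous Dirichlet conditions on `u`. -/
def SWSolution (T α : ℝ) (η u : ℝ → ℝ → ℝ) : Prop :=
  ContDiff ℝ (⊤ : ℕ∞) (Function.uncurry η) ∧ ContDiff ℝ (⊤ : ℕ∞) (Function.uncurry u) ∧
  (∀ t ∈ Icc (0:ℝ) T, ∀ x ∈ Icc (0:ℝ) 1,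
      deriv (fun s => η s x) t + deriv (fun y => u t y + η t y * u t y) x = 0) ∧
  (∀ t ∈ Icc (0:ℝ) T, ∀ x ∈ Icc (0:ℝ) 1,
      deriv (fun s => u s x) t + deriv (fun y => η t y) x
        + u t x * deriv (fun y => u t y) x = 0) ∧
  (∀ t ∈ Icc (0:ℝ) T, u t 0 = 0 ∧ u t 1 = 0) ∧
  (∀ t ∈ Icc (0:ℝ) T, ∀ x ∈ Icc (0:ℝ) 1, α ≤ 1 + η t x)

/-- The RK4 coefficients a_j. -/
def aRK : ℕ → ℝ
  | 1 => 1/2 | 2 => 1/2 | 3 => 1 | _ => 0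

/-- The RK4 coefficients b_j. -/
def bRK : ℕ → ℝ
  | 1 => 1/6 | 2 => 1/3 | 3 => 1/3 | 4 => 1/6 | _ => 0

/-- Φ = W + V·W for a pair of stages (V, W). -/
def PhiOf (VW : (ℝ → ℝ) × (ℝ → ℝ)) : ℝ → ℝ := fun x => VW.2 x + VW.1 x * VW.2 x

/-- F = V_x + W·W_x for a pair of stages (V, W). -/
def FOf (VW : (ℝ → ℝ) × (ℝ → ℝ)) : ℝ → ℝ := fun x => deriv VW.1 x + VW.2 x * deriv VW.2 x

/-- The RK4 intermediate stages (V^{n,j}, W^{n,j}) starting from (Hn, Un). -/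
def RKstage (P P0 : (ℝ → ℝ) → (ℝ → ℝ)) (k : ℝ) (Hn Un : ℝ → ℝ) : ℕ → (ℝ → ℝ) × (ℝ → ℝ)
  | 0 => (Hn, Un)
  | j + 1 =>
      ((fun x => Hn x - k * aRK (j + 1) * P (deriv (PhiOf (RKstage P P0 k Hn Un j))) x),
       (fun x => Un x - k * aRK (j + 1) * P0 (FOf (RKstage P P0 k Hn Un j)) x))

/-- One full RK4 time step. -/
def RKstep (P P0 : (ℝ → ℝ) → (ℝ → ℝ)) (k : ℝ) (HU : (ℝ → ℝ) × (ℝ → ℝ)) :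
    (ℝ → ℝ) × (ℝ → ℝ) :=
  ((fun x => HU.1 x - k * P (deriv (fun y =>
      ∑ j ∈ Finset.range 4, bRK (j + 1) * PhiOf (RKstage P P0 k HU.1 HU.2 j) y)) x),
   (fun x => HU.2 x - k * P0 (fun y =>
      ∑ j ∈ Finset.range 4, bRK (j + 1) * FOf (RKstage P P0 k HU.1 HU.2 j) y) x))

/-- The fully discrete RK4 solution (H_h^n, U_h^n). -/
def RKsol (P P0 : (ℝ → ℝ) → (ℝ → ℝ)) (k : ℝ) (H0 U0 : ℝ → ℝ) : ℕ → (ℝ → ℝ) × (ℝ → ℝ)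
  | 0 => (H0, U0)
  | n + 1 => RKstep P P0 k (RKsol P P0 k H0 U0 n)

/-- The spatial truncation error ψ = H_t + P[(U + HU)_x]. -/
def psiD (P P0 : (ℝ → ℝ) → (ℝ → ℝ)) (η u : ℝ → ℝ → ℝ) (t x : ℝ) : ℝ :=
  deriv (fun s => P (η s) x) t
    + P (deriv (fun y => P0 (u t) y + P (η t) y * P0 (u t) y)) x

/-- The spatial truncation error ζ = U_t + P_0[H_x + U U_x]. -/
def zetaD (P P0 : (ℝ → ℝ) → (ℝ → ℝ)) (η u : ℝ → ℝ → ℝ) (t x : ℝ) : ℝ :=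
  deriv (fun s => P0 (u s) x) t
    + P0 (fun y => deriv (P (η t)) y + P0 (u t) y * deriv (P0 (u t)) y) x

/-- The pairs (ρ^{n,j}, r^{n,j}), j = 0, 1, 2, 3, of Lemma 4.2. -/
def rhoPair (P P0 : (ℝ → ℝ) → (ℝ → ℝ)) (Hn Un eps e : ℝ → ℝ) : ℕ → (ℝ → ℝ) × (ℝ → ℝ)
  | 0 => ((fun x => (1 + Hn x) * e x + Un x * eps x), (fun x => eps x + Un x * e x))
  | j + 1 =>
      ((fun x => (1 + Hn x) * P0 (deriv (rhoPair P P0 Hn Un eps e j).2) x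
          + Un x * P (deriv (rhoPair P P0 Hn Un eps e j).1) x),
       (fun x => P (deriv (rhoPair P P0 Hn Un eps e j).1) x
          + Un x * P0 (deriv (rhoPair P P0 Hn Un eps e j).2) x))

/-- The pairs (ρ^{n,i}, r^{n,i}) for i = -1, 0, 1, 2, 3, where
ρ^{n,-1}(x) = ∫₀ˣ ε and r^{n,-1}(x) = ∫₀ˣ e. -/
def rhoPairZ (P P0 : (ℝ → ℝ) → (ℝ → ℝ)) (Hn Un eps e : ℝ → ℝ) (i : ℤ) :
    (ℝ → ℝ) × (ℝ → ℝ) :=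
  if i < 0 then ((fun x => ∫ t in (0:ℝ)..x, eps t), (fun x => ∫ t in (0:ℝ)..x, e t))
  else rhoPair P P0 Hn Un eps e i.toNat

/-- The quantity γ_i^{n,l} of Lemma 4.3 (with integer indices). -/
def gammaZ (P P0 : (ℝ → ℝ) → (ℝ → ℝ)) (Hn Un eps e : ℝ → ℝ) (i l : ℤ) : ℝ :=
  ip (fun x => deriv Un x * P (deriv (rhoPairZ P P0 Hn Un eps e i).1) x)
     (P (deriv (rhoPairZ P P0 Hn Un eps e l).1)) +
  ip (fun x => ((1 + Hn x) * deriv Un x - deriv Hn x * Un x)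
        * P0 (deriv (rhoPairZ P P0 Hn Un eps e i).2) x)
     (P0 (deriv (rhoPairZ P P0 Hn Un eps e l).2))

/-- The quantity γ_i^{n,l} of Lemma 4.3 (with natural number indices). -/
def gammaN (P P0 : (ℝ → ℝ) → (ℝ → ℝ)) (Hn Un eps e : ℝ → ℝ) (i l : ℕ) : ℝ :=
  ip (fun x => deriv Un x * P (deriv (rhoPair P P0 Hn Un eps e i).1) x)
     (P (deriv (rhoPair P P0 Hn Un eps e l).1)) +
  ip (fun x => ((1 + Hn x) * deriv Un x - deriv Hn x * Un x)
        * P0 (deriv (rhoPair P P0 Hn Un eps e i).2) x)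
     (P0 (deriv (rhoPair P P0 Hn Un eps e l).2))


namespace SW18

open MeasureTheory Set

/-- The reference measure: Lebesgue on (0,1]. -/
noncomputable abbrev m01 : Measure ℝ := volume.restrict (Ioc (0:ℝ) 1)

/-- Bounded a.e.-measurable functions on (0,1]. -/
def Nb (f : ℝ → ℝ) : Prop :=
  AEStronglyMeasurable f m01 ∧ ∃ B : ℝ, ∀ᵐ x ∂m01, |f x| ≤ B

lemma ae_m01_of_Ioo {p : ℝ → Prop} (E : Set ℝ) (hE : E.Countable)
    (h : ∀ x ∈ Ioo (0:ℝ) 1 \ E, p x) : ∀ᵐ x ∂m01, p x := by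
  rw [ae_restrict_iff' measurableSet_Ioc, ae_iff]
  refine measure_mono_null (fun x hx => ?_) ((hE.insert 1).measure_zero _)
  simp only [mem_setOf_eq, not_forall] at hx
  obtain ⟨hx1, hx2⟩ := hx
  by_contra hmem
  simp only [mem_insert_iff, not_or] at hmem
  exact hx2 (h x ⟨⟨hx1.1, lt_of_le_of_ne hx1.2 hmem.1⟩, hmem.2⟩)

lemma Nb.of_bound {f : ℝ → ℝ} (hm : AEStronglyMeasurable f m01) (E : Set ℝ) (hE : E.Countable)
    (B : ℝ) (h : ∀ x ∈ Ioo (0:ℝ) 1 \ E, |f x| ≤ B) : Nb f :=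
  ⟨hm, B, ae_m01_of_Ioo E hE h⟩

lemma Nb.mul {f g : ℝ → ℝ} (hf : Nb f) (hg : Nb g) : Nb (fun x => f x * g x) := by
  obtain ⟨Bf, hBf⟩ := hf.2
  obtain ⟨Bg, hBg⟩ := hg.2
  refine ⟨hf.1.mul hg.1, |Bf| * |Bg|, ?_⟩
  filter_upwards [hBf, hBg] with x h1 h2
  rw [abs_mul]
  exact mul_le_mul (h1.trans (le_abs_self _)) (h2.trans (le_abs_self _)) (abs_nonneg _)
    (abs_nonneg _)

lemma Nb.add {f g : ℝ → ℝ} (hf : Nb f) (hg : Nb g) : Nb (fun x => f x + g x) := by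
  obtain ⟨Bf, hBf⟩ := hf.2
  obtain ⟨Bg, hBg⟩ := hg.2
  refine ⟨hf.1.add hg.1, Bf + Bg, ?_⟩
  filter_upwards [hBf, hBg] with x h1 h2
  exact (abs_add_le _ _).trans (add_le_add h1 h2)

lemma Nb.sub {f g : ℝ → ℝ} (hf : Nb f) (hg : Nb g) : Nb (fun x => f x - g x) := by
  obtain ⟨Bf, hBf⟩ := hf.2
  obtain ⟨Bg, hBg⟩ := hg.2
  refine ⟨hf.1.sub hg.1, Bf + Bg, ?_⟩
  filter_upwards [hBf, hBg] with x h1 h2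
  exact (abs_sub _ _).trans (add_le_add h1 h2)

lemma Nb.const (c : ℝ) : Nb (fun _ => c) :=
  ⟨aestronglyMeasurable_const, |c|, Filter.Eventually.of_forall fun _ => le_rfl⟩

lemma Nb.int_m01 {f : ℝ → ℝ} (hf : Nb f) : Integrable f m01 := by
  obtain ⟨B, hB⟩ := hf.2
  refine Integrable.mono' (g := fun _ => B) ?_ hf.1 (hB.mono fun x h => by simpa using h)
  exact integrable_const B

lemma Nb.integrable {f : ℝ → ℝ} (hf : Nb f) : IntervalIntegrable f volume 0 1 := by
  rw [intervalIntegrable_iff, uIoc_of_le (zero_le_one' ℝ)]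
  exact hf.int_m01

lemma ip_eq_m01 (f g : ℝ → ℝ) : ip f g = ∫ x, f x * g x ∂m01 :=
  intervalIntegral.integral_of_le (zero_le_one' ℝ)

lemma ip_comm (f g : ℝ → ℝ) : ip f g = ip g f := by
  unfold ip
  exact intervalIntegral.integral_congr fun x _ => mul_comm _ _

lemma ip_congr' {f f' : ℝ → ℝ} (g : ℝ → ℝ) (E : Set ℝ) (hE : E.Countable)
    (h : ∀ x ∈ Ioo (0:ℝ) 1 \ E, f x = f' x) : ip f g = ip f' g := by
  rw [ip_eq_m01, ip_eq_m01]
  refine integral_congr_ae ?_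
  filter_upwards [ae_m01_of_Ioo (p := fun x => f x = f' x) E hE h] with x hx
  rw [hx]

lemma ip_congr {f f' : ℝ → ℝ} (g : ℝ → ℝ) (h : ∀ x ∈ Ioo (0:ℝ) 1, f x = f' x) :
    ip f g = ip f' g :=
  ip_congr' g ∅ countable_empty fun x hx => h x hx.1

lemma ip_add_left {f g k : ℝ → ℝ} (hf : Nb f) (hg : Nb g) (hk : Nb k) :
    ip (fun x => f x + g x) k = ip f k + ip g k := by
  simp only [ip_eq_m01]
  rw [← integral_add ((hf.mul hk).int_m01) ((hg.mul hk).int_m01)]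
  exact integral_congr_ae (Filter.Eventually.of_forall fun x => by simp; ring)

lemma ip_sub_left {f g k : ℝ → ℝ} (hf : Nb f) (hg : Nb g) (hk : Nb k) :
    ip (fun x => f x - g x) k = ip f k - ip g k := by
  simp only [ip_eq_m01]
  rw [← integral_sub ((hf.mul hk).int_m01) ((hg.mul hk).int_m01)]
  exact integral_congr_ae (Filter.Eventually.of_forall fun x => by simp; ring)

lemma ip_add_right {f g k : ℝ → ℝ} (hf : Nb f) (hg : Nb g) (hk : Nb k) :
    ip k (fun x => f x + g x) = ip k f + ip k g := by
  rw [ip_comm, ip_add_left hf hg hk, ip_comm f k, ip_comm g k]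

lemma ip_sub_right {f g k : ℝ → ℝ} (hf : Nb f) (hg : Nb g) (hk : Nb k) :
    ip k (fun x => f x - g x) = ip k f - ip k g := by
  rw [ip_comm, ip_sub_left hf hg hk, ip_comm f k, ip_comm g k]

lemma ip_eq_of_integrand {f g f' g' : ℝ → ℝ} (h : ∀ x, f x * g x = f' x * g' x) :
    ip f g = ip f' g' :=
  intervalIntegral.integral_congr fun x _ => h x

lemma ip_self_nonneg (f : ℝ → ℝ) : 0 ≤ ip f f :=
  intervalIntegral.integral_nonneg (zero_le_one' ℝ) fun x _ => mul_self_nonneg _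

lemma L2_nonneg (f : ℝ → ℝ) : 0 ≤ L2 f := Real.sqrt_nonneg _

lemma L2_sq (f : ℝ → ℝ) : (L2 f) ^ 2 = ip f f := Real.sq_sqrt (ip_self_nonneg f)

lemma abs_ip_le {f g : ℝ → ℝ} (hf : Nb f) (hg : Nb g) : |ip f g| ≤ L2 f * L2 g := by
  have key : ∀ t : ℝ, 0 ≤ ip g g * (t * t) + (2 * ip f g) * t + ip f f := by
    intro t
    have h1 : ip (fun x => f x + t * g x) (fun x => f x + t * g x) =
        ip g g * (t * t) + (2 * ip f g) * t + ip f f := by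
      have htg : Nb (fun x => t * g x) := (Nb.const t).mul hg
      rw [ip_add_left hf htg (hf.add htg), ip_add_right hf htg hf, ip_add_right hf htg htg]
      have e1 : ip f (fun x => t * g x) = t * ip f g := by
        rw [ip_eq_m01, ip_eq_m01, ← integral_const_mul]
        exact integral_congr_ae (Filter.Eventually.of_forall fun x => by simp; ring)
      have e2 : ip (fun x => t * g x) f = t * ip f g := by rw [ip_comm]; exact e1
      have e3 : ip (fun x => t * g x) (fun x => t * g x) = t * (t * ip g g) := by
        rw [ip_eq_m01, ip_eq_m01 g g, ← integral_const_mul, ← integral_const_mul]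
        exact integral_congr_ae (Filter.Eventually.of_forall fun x => by simp; ring)
      rw [e1, e2, e3]; ring
    rw [← h1]
    exact ip_self_nonneg _
  have hd := discrim_le_zero key
  rw [discrim] at hd
  have h2 : (ip f g) ^ 2 ≤ (L2 f * L2 g) ^ 2 := by
    rw [mul_pow, L2_sq, L2_sq]; nlinarith
  calc |ip f g| = Real.sqrt ((ip f g) ^ 2) := (Real.sqrt_sq_eq_abs _).symm
    _ ≤ Real.sqrt ((L2 f * L2 g) ^ 2) := Real.sqrt_le_sqrt h2
    _ = |L2 f * L2 g| := Real.sqrt_sq_eq_abs _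
    _ = L2 f * L2 g := abs_of_nonneg (mul_nonneg (L2_nonneg f) (L2_nonneg g))

lemma ip_le_L2 {f g : ℝ → ℝ} (hf : Nb f) (hg : Nb g) : ip f g ≤ L2 f * L2 g :=
  (le_abs_self _).trans (abs_ip_le hf hg)

lemma L2_congr' {f f' : ℝ → ℝ} (E : Set ℝ) (hE : E.Countable)
    (h : ∀ x ∈ Ioo (0:ℝ) 1 \ E, f x = f' x) : L2 f = L2 f' := by
  unfold L2
  rw [ip_congr' f E hE h, ip_comm, ip_congr' f' E hE h, ip_comm]

lemma L2_add_le {f g : ℝ → ℝ} (hf : Nb f) (hg : Nb g) :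
    L2 (fun x => f x + g x) ≤ L2 f + L2 g := by
  have h1 : ip (fun x => f x + g x) (fun x => f x + g x) ≤ (L2 f + L2 g) ^ 2 := by
    rw [ip_add_left hf hg (hf.add hg), ip_add_right hf hg hf, ip_add_right hf hg hg]
    have := abs_ip_le hf hg
    have h2 := L2_sq f; have h3 := L2_sq g
    have h4 : ip g f = ip f g := ip_comm g f
    nlinarith [abs_le.1 this]
  calc L2 (fun x => f x + g x) = Real.sqrt (ip _ _) := rfl
    _ ≤ Real.sqrt ((L2 f + L2 g) ^ 2) := Real.sqrt_le_sqrt h1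
    _ = |L2 f + L2 g| := Real.sqrt_sq_eq_abs _
    _ = L2 f + L2 g := abs_of_nonneg (add_nonneg (L2_nonneg f) (L2_nonneg g))

lemma L2_sub_le {f g : ℝ → ℝ} (hf : Nb f) (hg : Nb g) :
    L2 (fun x => f x - g x) ≤ L2 f + L2 g := by
  have : ∀ x ∈ Ioo (0:ℝ) 1 \ (∅ : Set ℝ), f x - g x = f x + (-1) * g x := by intros; ring
  rw [L2_congr' ∅ countable_empty this]
  refine (L2_add_le hf ((Nb.const (-1)).mul hg)).trans ?_
  have : L2 (fun x => (-1 : ℝ) * g x) ≤ L2 g := by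
    unfold L2
    rw [show ip (fun x => (-1:ℝ) * g x) (fun x => (-1:ℝ) * g x) = ip g g from
      intervalIntegral.integral_congr fun x _ => by ring]
  linarith

/-- weighted bound: if `|a| ≤ A` a.e. then `‖a·f‖ ≤ A‖f‖`. -/
lemma L2_weight_le {a f : ℝ → ℝ} (ha : Nb a) (hf : Nb f) (A : ℝ) (hA : 0 ≤ A)
    (E : Set ℝ) (hE : E.Countable) (hb : ∀ x ∈ Ioo (0:ℝ) 1 \ E, |a x| ≤ A) :
    L2 (fun x => a x * f x) ≤ A * L2 f := by
  have h1 : ip (fun x => a x * f x) (fun x => a x * f x) ≤ A ^ 2 * ip f f := by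
    rw [ip_eq_m01, ip_eq_m01]
    rw [show A ^ 2 * ∫ x, f x * f x ∂m01 = ∫ x, A ^ 2 * (f x * f x) ∂m01 from
      (integral_const_mul _ _).symm]
    refine integral_mono_ae ((ha.mul hf).mul (ha.mul hf)).int_m01
      (((Nb.const (A^2)).mul (hf.mul hf)).int_m01) ?_
    filter_upwards [ae_m01_of_Ioo E hE hb] with x hx
    have h2 : (a x * f x) * (a x * f x) = (a x)^2 * (f x)^2 := by ring
    have h3 : (a x)^2 ≤ A^2 := by
      rw [← sq_abs]
      exact pow_le_pow_left₀ (abs_nonneg _) hx 2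
    have h4 : (0:ℝ) ≤ (f x)^2 := sq_nonneg _
    calc (a x * f x) * (a x * f x) = (a x)^2 * (f x)^2 := by ring
      _ ≤ A^2 * (f x)^2 := mul_le_mul_of_nonneg_right h3 h4
      _ = A^2 * (f x * f x) := by ring
  calc L2 (fun x => a x * f x) = Real.sqrt (ip _ _) := rfl
    _ ≤ Real.sqrt (A^2 * ip f f) := Real.sqrt_le_sqrt h1
    _ = Real.sqrt (A^2) * Real.sqrt (ip f f) := Real.sqrt_mul (sq_nonneg _) _
    _ = A * L2 f := by rw [Real.sqrt_sq hA]; rfl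

end SW18
namespace SW18
open MeasureTheory Set

/-- Functions continuous on [0,1], differentiable on (0,1) with bounded derivative. -/
structure Reg (f : ℝ → ℝ) : Prop where
  cont : ContinuousOn f (Icc 0 1)
  diff : ∀ x ∈ Ioo (0:ℝ) 1, DifferentiableAt ℝ f x
  dbdd : ∃ B, ∀ x ∈ Ioo (0:ℝ) 1, |deriv f x| ≤ B

lemma Reg.bddIcc {f : ℝ → ℝ} (hf : Reg f) : ∃ B, ∀ x ∈ Icc (0:ℝ) 1, |f x| ≤ B := by
  obtain ⟨B, hB⟩ := isCompact_Icc.exists_bound_of_continuousOn hf.cont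
  exact ⟨B, fun x hx => by simpa using hB x hx⟩

lemma Reg.nb {f : ℝ → ℝ} (hf : Reg f) : Nb f := by
  obtain ⟨B, hB⟩ := hf.bddIcc
  exact Nb.of_bound ((hf.cont.mono Ioc_subset_Icc_self).aestronglyMeasurable measurableSet_Ioc)
    ∅ countable_empty B (fun x hx => hB x (Ioo_subset_Icc_self hx.1))

lemma Reg.nb_deriv {f : ℝ → ℝ} (hf : Reg f) : Nb (deriv f) := by
  obtain ⟨B, hB⟩ := hf.dbdd
  exact Nb.of_bound ((measurable_deriv f).aestronglyMeasurable.restrict)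
    ∅ countable_empty B (fun x hx => hB x hx.1)

lemma Reg.add {f g : ℝ → ℝ} (hf : Reg f) (hg : Reg g) : Reg (fun x => f x + g x) := by
  obtain ⟨Bf, hBf⟩ := hf.dbdd
  obtain ⟨Bg, hBg⟩ := hg.dbdd
  refine ⟨hf.cont.add hg.cont, fun x hx => (hf.diff x hx).add (hg.diff x hx), |Bf| + |Bg|, ?_⟩
  intro x hx
  rw [deriv_fun_add (hf.diff x hx) (hg.diff x hx)]
  exact (abs_add_le _ _).trans (add_le_add ((hBf x hx).trans (le_abs_self _))
    ((hBg x hx).trans (le_abs_self _)))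

lemma Reg.deriv_mul {f g : ℝ → ℝ} (hf : Reg f) (hg : Reg g) {x : ℝ} (hx : x ∈ Ioo (0:ℝ) 1) :
    deriv (fun y => f y * g y) x = deriv f x * g x + f x * deriv g x :=
  ((hf.diff x hx).hasDerivAt.mul (hg.diff x hx).hasDerivAt).deriv

lemma Reg.mul {f g : ℝ → ℝ} (hf : Reg f) (hg : Reg g) : Reg (fun x => f x * g x) := by
  obtain ⟨Bf, hBf⟩ := hf.dbdd
  obtain ⟨Bg, hBg⟩ := hg.dbdd
  obtain ⟨Mf, hMf⟩ := hf.bddIcc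
  obtain ⟨Mg, hMg⟩ := hg.bddIcc
  refine ⟨hf.cont.mul hg.cont, fun x hx => (hf.diff x hx).mul (hg.diff x hx),
    |Bf| * |Mg| + |Mf| * |Bg|, ?_⟩
  intro x hx
  rw [hf.deriv_mul hg hx]
  have h1 : |deriv f x * g x| ≤ |Bf| * |Mg| := by
    rw [abs_mul]
    exact mul_le_mul ((hBf x hx).trans (le_abs_self _))
      ((hMg x (Ioo_subset_Icc_self hx)).trans (le_abs_self _)) (abs_nonneg _) (abs_nonneg _)
  have h2 : |f x * deriv g x| ≤ |Mf| * |Bg| := by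
    rw [abs_mul]
    exact mul_le_mul ((hMf x (Ioo_subset_Icc_self hx)).trans (le_abs_self _))
      ((hBg x hx).trans (le_abs_self _)) (abs_nonneg _) (abs_nonneg _)
  exact (abs_add_le _ _).trans (add_le_add h1 h2)

lemma Reg.const (c : ℝ) : Reg (fun _ => c) :=
  ⟨continuousOn_const, fun x _ => differentiableAt_const c, 0, fun x _ => by simp⟩

lemma Reg.const_add {f : ℝ → ℝ} (hf : Reg f) (c : ℝ) : Reg (fun x => c + f x) :=
  (Reg.const c).add hf

lemma deriv_const_add'' (f : ℝ → ℝ) (c x : ℝ) : deriv (fun y => c + f y) x = deriv f x := by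
  simp [deriv_const_add]

/-- Fundamental theorem of calculus on [0,1]. -/
lemma Reg.ftc {f : ℝ → ℝ} (hf : Reg f) : ∫ x in (0:ℝ)..1, deriv f x = f 1 - f 0 :=
  intervalIntegral.integral_eq_sub_of_hasDeriv_right_of_le (zero_le_one' ℝ) hf.cont
    (fun x hx => (hf.diff x hx).hasDerivAt.hasDerivWithinAt) hf.nb_deriv.integrable

/-- Integration by parts on [0,1]. -/
lemma Reg.ibp {f g : ℝ → ℝ} (hf : Reg f) (hg : Reg g) :
    ip (deriv f) g + ip f (deriv g) = f 1 * g 1 - f 0 * g 0 := by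
  have h := (hf.mul hg).ftc
  have h2 : ip (deriv f) g + ip f (deriv g) = ∫ x in (0:ℝ)..1, deriv (fun y => f y * g y) x := by
    rw [ip_eq_m01, ip_eq_m01,
      ← integral_add (hf.nb_deriv.mul hg.nb).int_m01 (hf.nb.mul hg.nb_deriv).int_m01,
      show (∫ x in (0:ℝ)..1, deriv (fun y => f y * g y) x) =
        ∫ x, deriv (fun y => f y * g y) x ∂m01 from
        intervalIntegral.integral_of_le (zero_le_one' ℝ)]
    refine integral_congr_ae ?_
    filter_upwards [ae_m01_of_Ioo (p := fun x =>
      deriv f x * g x + f x * deriv g x = deriv (fun y => f y * g y) x) ∅ countable_empty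
      (fun x hx => (hf.deriv_mul hg hx.1).symm)] with x hx
    exact hx
  rw [h2, h]

end SW18
namespace SW18
open MeasureTheory Set

variable {r μ : ℕ} {c : ℝ} {D : Disc c}

lemma sp_reg (hμ1 : 1 ≤ μ) {φ : ℝ → ℝ} (hφ : φ ∈ Sp r μ D) : Reg φ := by
  have h1 : (1 : WithTop ℕ∞) ≤ (μ : WithTop ℕ∞) := by exact_mod_cast hμ1
  have hdOn : DifferentiableOn ℝ φ (Icc 0 1) := hφ.1.differentiableOn (by simp; omega)
  have hdiff : ∀ x ∈ Ioo (0:ℝ) 1, DifferentiableAt ℝ φ x := fun x hx =>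
    (hdOn x (Ioo_subset_Icc_self hx)).differentiableAt (Icc_mem_nhds hx.1 hx.2)
  refine ⟨hφ.1.continuousOn, hdiff, ?_⟩
  have hcd : ContinuousOn (derivWithin φ (Icc 0 1)) (Icc 0 1) :=
    hφ.1.continuousOn_derivWithin (uniqueDiffOn_Icc one_pos) h1
  obtain ⟨B, hB⟩ := isCompact_Icc.exists_bound_of_continuousOn hcd
  refine ⟨B, fun x hx => ?_⟩
  rw [← derivWithin_of_mem_nhds (Icc_mem_nhds hx.1 hx.2)]
  simpa using hB x (Ioo_subset_Icc_self hx)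

lemma sp0_reg (hμ1 : 1 ≤ μ) {φ : ℝ → ℝ} (hφ : φ ∈ Sp0 r μ D) : Reg φ := sp_reg hμ1 hφ.1

lemma sp_sub {f g : ℝ → ℝ} (hf : f ∈ Sp r μ D) (hg : g ∈ Sp r μ D) :
    (fun x => f x - g x) ∈ Sp r μ D := by
  refine ⟨hf.1.sub hg.1, fun i => ?_⟩
  obtain ⟨p, hp1, hp2⟩ := hf.2 i
  obtain ⟨q, hq1, hq2⟩ := hg.2 i
  exact ⟨p - q, (Polynomial.natDegree_sub_le p q).trans (max_le hp1 hq1),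
    fun t ht => by simp only [hp2 t ht, hq2 t ht, Polynomial.eval_sub]⟩

lemma sp0_sub {f g : ℝ → ℝ} (hf : f ∈ Sp0 r μ D) (hg : g ∈ Sp0 r μ D) :
    (fun x => f x - g x) ∈ Sp0 r μ D :=
  ⟨sp_sub hf.1 hg.1, by simp only [hf.2.1, hg.2.1, sub_zero], by
    simp only [hf.2.2, hg.2.2, sub_zero]⟩

lemma disc_pt_mem (i : Fin (D.N + 2)) : D.pt i ∈ Icc (0:ℝ) 1 := by
  constructor
  · rw [← D.left]; exact D.mono.monotone (Fin.zero_le i)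
  · rw [← D.right]; exact D.mono.monotone (Fin.le_last i)

lemma disc_cover {x : ℝ} (hx : x ∈ Icc (0:ℝ) 1) :
    ∃ i : Fin (D.N + 1), x ∈ Icc (D.pt i.castSucc) (D.pt i.succ) := by
  classical
  set s : Finset (Fin (D.N + 1)) :=
    Finset.univ.filter (fun j => D.pt j.castSucc ≤ x) with hs
  have h0 : (0 : Fin (D.N + 1)) ∈ s := by
    simp only [hs, Finset.mem_filter, Finset.mem_univ, true_and]
    rw [show (0 : Fin (D.N+1)).castSucc = (0 : Fin (D.N+2)) from rfl, D.left]
    exact hx.1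
  have hne : s.Nonempty := ⟨0, h0⟩
  set i := s.max' hne with hi
  have hile : D.pt i.castSucc ≤ x := by
    have := s.max'_mem hne
    simp only [hs, Finset.mem_filter] at this
    exact this.2
  refine ⟨i, hile, ?_⟩
  by_contra hlt
  push_neg at hlt
  have hlast : (i : ℕ) < D.N := by
    by_contra hge
    push_neg at hge
    have : i = Fin.last D.N := by
      apply Fin.ext; simp
      omega
    rw [this, Fin.succ_last, D.right] at hlt
    exact absurd hx.2 (not_le.2 hlt)
  set j : Fin (D.N + 1) := ⟨(i : ℕ) + 1, by omega⟩ with hj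
  have hjc : j.castSucc = i.succ := by apply Fin.ext; simp [hj]
  have hjs : j ∈ s := by
    simp only [hs, Finset.mem_filter, Finset.mem_univ, true_and, hjc]
    exact hlt.le
  have := s.le_max' j hjs
  rw [← hi] at this
  have : (j : ℕ) ≤ (i : ℕ) := this
  simp [hj] at this

lemma knots_countable : (Set.range D.pt).Countable := (Set.finite_range D.pt).countable

/-- Linf bounds pointwise values for continuous functions. -/
lemma le_Linf {f : ℝ → ℝ} (hf : ContinuousOn f (Icc 0 1)) {x : ℝ} (hx : x ∈ Icc (0:ℝ) 1) :
    |f x| ≤ Linf f := by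
  have hbdd : BddAbove ((fun x => |f x|) '' Icc (0:ℝ) 1) := by
    obtain ⟨B, hB⟩ := isCompact_Icc.exists_bound_of_continuousOn hf
    exact ⟨B, fun y hy => by obtain ⟨z, hz, rfl⟩ := hy; simpa using hB z hz⟩
  exact le_csSup hbdd ⟨x, hx, rfl⟩

lemma Linf_le {f : ℝ → ℝ} {M : ℝ} (hM : ∀ x ∈ Icc (0:ℝ) 1, |f x| ≤ M) : Linf f ≤ M :=
  csSup_le ((nonempty_Icc.mpr zero_le_one).image _) fun y hy => by
    obtain ⟨z, hz, rfl⟩ := hy; exact hM z hz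

lemma Linf_nonneg_of_cont {f : ℝ → ℝ} (hf : ContinuousOn f (Icc 0 1)) : 0 ≤ Linf f :=
  (abs_nonneg (f 0)).trans (le_Linf hf ⟨le_refl 0, zero_le_one⟩)

/-- Winf is nonnegative for continuous functions (only the 0th term needed). -/
lemma Winf_nonneg {s : ℕ} {f : ℝ → ℝ} (hf : ContinuousOn f (Icc 0 1))
    (hall : ∀ j, j ≤ s → BddAbove ((fun x => |iteratedDeriv j f x|) '' Icc (0:ℝ) 1)) :
    0 ≤ Winf s f := by
  refine Finset.sum_nonneg fun j hj => ?_
  have hjs : j ≤ s := by simpa [Nat.lt_succ_iff] using hj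
  have h0 : (0:ℝ) ∈ Icc (0:ℝ) 1 := by norm_num
  exact (abs_nonneg (iteratedDeriv j f 0)).trans (le_csSup (hall j hjs) ⟨0, h0, rfl⟩)

section Proj
variable {S : Set (ℝ → ℝ)} {P : (ℝ → ℝ) → (ℝ → ℝ)}

variable (hP : IsL2Proj S P) (hSnb : ∀ f ∈ S, Nb f) (hSsub : ∀ f ∈ S, ∀ g ∈ S,
    (fun x => f x - g x) ∈ S)

include hP hSnb in
lemma proj_ip_right {v χ : ℝ → ℝ} (hv : Nb v) (hχ : χ ∈ S) : ip χ (P v) = ip χ v := by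
  have h0 := hP.2.1 v χ hχ
  rw [ip_sub_left hv (hSnb _ (hP.1 v)) (hSnb _ hχ)] at h0
  rw [ip_comm χ (P v), ip_comm χ v]
  linarith

include hP hSnb in
lemma proj_L2_le {v : ℝ → ℝ} (hv : Nb v) : L2 (P v) ≤ L2 v := by
  have h1 : ip (P v) (P v) = ip (P v) v := proj_ip_right hP hSnb hv (hP.1 v)
  have h2 : ip (P v) v ≤ L2 (P v) * L2 v := ip_le_L2 (hSnb _ (hP.1 v)) hv
  have h3 : (L2 (P v))^2 = ip (P v) (P v) := L2_sq _
  nlinarith [L2_nonneg (P v), L2_nonneg v]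

include hP hSnb hSsub in
lemma proj_best {v χ : ℝ → ℝ} (hv : Nb v) (hχ : χ ∈ S) :
    L2 (fun x => v x - P v x) ≤ L2 (fun x => v x - χ x) := by
  have hPv := hP.1 v
  have hw : (fun x => P v x - χ x) ∈ S := hSsub _ hPv _ hχ
  have horth : ip (fun x => v x - P v x) (fun x => P v x - χ x) = 0 := hP.2.1 v _ hw
  have hnb1 : Nb (fun x => v x - P v x) := hv.sub (hSnb _ hPv)
  have hnb2 : Nb (fun x => P v x - χ x) := (hSnb _ hPv).sub (hSnb _ hχ)
  have hexp : ip (fun x => v x - χ x) (fun x => v x - χ x) =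
      ip (fun x => v x - P v x) (fun x => v x - P v x) +
      ip (fun x => P v x - χ x) (fun x => P v x - χ x) := by
    have e : ∀ x ∈ Ioo (0:ℝ) 1, v x - χ x = (v x - P v x) + (P v x - χ x) := by
      intros; ring
    have key : ip (fun x => v x - χ x) (fun x => v x - χ x) =
        ip (fun x => (v x - P v x) + (P v x - χ x)) (fun x => (v x - P v x) + (P v x - χ x)) := by
      rw [ip_congr _ e, ip_comm, ip_congr _ e, ip_comm]
    have horth2 : ip (fun x => P v x - χ x) (fun x => v x - P v x) = 0 := by
      rw [ip_comm]; exact horth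
    rw [key, ip_add_left hnb1 hnb2 (hnb1.add hnb2), ip_add_right hnb1 hnb2 hnb1,
      ip_add_right hnb1 hnb2 hnb2, horth, horth2]
    ring
  unfold L2
  exact Real.sqrt_le_sqrt (by rw [hexp]; linarith [ip_self_nonneg (fun x => P v x - χ x)])

end Proj

end SW18
namespace SW18
open MeasureTheory Set Polynomial

/-- Markov-type inequality on [0,1], with a constant depending only on the degree bound. -/
lemma markov01 (n : ℕ) : ∃ C0 : ℝ, 0 ≤ C0 ∧ ∀ q : Polynomial ℝ, q.natDegree ≤ n →
    ∀ M : ℝ, (∀ y ∈ Icc (0:ℝ) 1, |q.eval y| ≤ M) →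
    ∀ x ∈ Icc (0:ℝ) 1, |(Polynomial.derivative q).eval x| ≤ C0 * M := by
  classical
  haveI : FiniteDimensional ℝ (degreeLT ℝ (n+1)) :=
    Module.Finite.equiv (degreeLTEquiv ℝ (n+1)).symm
  set T : Polynomial ℝ →ₗ[ℝ] C(Icc (0:ℝ) 1, ℝ) :=
    (toContinuousMapOnAlgHom (Icc (0:ℝ) 1)).toLinearMap with hT
  set L : degreeLT ℝ (n+1) →ₗ[ℝ] C(Icc (0:ℝ) 1, ℝ) :=
    T ∘ₗ (degreeLT ℝ (n+1)).subtype with hL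
  set Φ : degreeLT ℝ (n+1) →ₗ[ℝ] C(Icc (0:ℝ) 1, ℝ) :=
    T ∘ₗ (Polynomial.derivative ∘ₗ (degreeLT ℝ (n+1)).subtype) with hΦ
  have hinj : Function.Injective L := by
    intro a b hab
    apply Subtype.ext
    have h1 : ∀ y : Icc (0:ℝ) 1, (a : Polynomial ℝ).eval (y:ℝ) = (b : Polynomial ℝ).eval (y:ℝ) := by
      intro y
      have := congrFun (congrArg (fun f : C(Icc (0:ℝ) 1, ℝ) => (f : Icc (0:ℝ) 1 → ℝ)) hab) y
      simpa [hL, hT] using this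
    have hroot : {x : ℝ | ((a : Polynomial ℝ) - (b : Polynomial ℝ)).IsRoot x}.Infinite := by
      refine Set.Infinite.mono (s := Icc (0:ℝ) 1) ?_ ?_
      · intro x hx
        have := h1 ⟨x, hx⟩
        simp [Polynomial.IsRoot, this]
      · exact Set.infinite_coe_iff.mp (Set.Icc.infinite (show (0:ℝ) < 1 by norm_num))
    have := Polynomial.eq_zero_of_infinite_isRoot _ hroot
    exact sub_eq_zero.1 this
  set e := LinearEquiv.ofInjective L hinj
  haveI : FiniteDimensional ℝ (LinearMap.range L) :=
    Module.Finite.equiv e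
  set F : LinearMap.range L →ₗ[ℝ] C(Icc (0:ℝ) 1, ℝ) := Φ ∘ₗ (e.symm : LinearMap.range L →ₗ[ℝ] degreeLT ℝ (n+1))
  set F' : @ContinuousLinearMap ℝ ℝ _ _ (RingHom.id ℝ) (LinearMap.range L) PseudoMetricSpace.toUniformSpace.toTopologicalSpace SeminormedAddCommGroup.toAddCommGroup.toAddCommMonoid C(Icc (0:ℝ) 1, ℝ) PseudoMetricSpace.toUniformSpace.toTopologicalSpace SeminormedAddCommGroup.toAddCommGroup.toAddCommMonoid NormedSpace.toModule NormedSpace.toModule := LinearMap.toContinuousLinearMap F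
  refine ⟨‖F'‖, ContinuousLinearMap.opNorm_nonneg F', ?_⟩
  intro q hq M hM x hx
  have hqmem : q ∈ degreeLT ℝ (n+1) := by
    rw [mem_degreeLT]
    calc q.degree ≤ (q.natDegree : WithBot ℕ) := degree_le_natDegree
      _ ≤ (n : WithBot ℕ) := by exact_mod_cast hq
      _ < ((n+1 : ℕ) : WithBot ℕ) := by exact_mod_cast Nat.lt_succ_self n
  set v : degreeLT ℝ (n+1) := ⟨q, hqmem⟩
  have hM0 : 0 ≤ M := (abs_nonneg _).trans (hM 0 ⟨le_refl 0, zero_le_one⟩)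
  have hLv : ‖L v‖ ≤ M := by
    rw [ContinuousMap.norm_le _ hM0]
    intro y
    simpa [hL, hT] using hM (y : ℝ) y.2
  have hFval : F' ⟨L v, LinearMap.mem_range_self L v⟩ = Φ v := by
    show F ⟨L v, _⟩ = Φ v
    have : e.symm ⟨L v, LinearMap.mem_range_self L v⟩ = v := by
      apply e.injective
      rw [LinearEquiv.apply_symm_apply]
      apply Subtype.ext
      rfl
    simp [F, this]
  have hnorm : ‖Φ v‖ ≤ ‖F'‖ * M := by
    calc ‖Φ v‖ = ‖F' ⟨L v, LinearMap.mem_range_self L v⟩‖ := by rw [hFval]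
      _ ≤ ‖F'‖ * ‖(⟨L v, LinearMap.mem_range_self L v⟩ : LinearMap.range L)‖ :=
          F'.le_opNorm _
      _ = ‖F'‖ * ‖L v‖ := rfl
      _ ≤ ‖F'‖ * M := by
          exact mul_le_mul_of_nonneg_left hLv (ContinuousLinearMap.opNorm_nonneg F')
  calc |(Polynomial.derivative q).eval x| = ‖(Φ v) ⟨x, hx⟩‖ := by simp [hΦ, hT, v]
    _ ≤ ‖Φ v‖ := ContinuousMap.norm_coe_le_norm _ _
    _ ≤ ‖F'‖ * M := hnorm

/-- Markov-type inequality on general intervals. -/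
lemma markov (n : ℕ) : ∃ CM : ℝ, 0 ≤ CM ∧ ∀ p : Polynomial ℝ, p.natDegree ≤ n →
    ∀ a b : ℝ, a < b → ∀ M : ℝ, (∀ y ∈ Icc a b, |p.eval y| ≤ M) →
    ∀ x ∈ Icc a b, |(Polynomial.derivative p).eval x| ≤ CM / (b - a) * M := by
  obtain ⟨C0, hC0, hMk⟩ := markov01 n
  refine ⟨C0, hC0, ?_⟩
  intro p hp a b hab M hM x hx
  have hba : (0:ℝ) < b - a := by linarith
  set l : Polynomial ℝ := Polynomial.C a + Polynomial.C (b - a) * Polynomial.X with hl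
  set q : Polynomial ℝ := p.comp l with hq
  have hleval : ∀ t : ℝ, l.eval t = a + (b - a) * t := by intro t; simp [hl]
  have hqeval : ∀ t : ℝ, q.eval t = p.eval (a + (b - a) * t) := by
    intro t; rw [hq, Polynomial.eval_comp, hleval]
  have hqdeg : q.natDegree ≤ n := by
    refine Polynomial.natDegree_comp_le.trans ?_
    have hldeg : l.natDegree ≤ 1 := by
      refine (Polynomial.natDegree_add_le _ _).trans ?_
      simp only [Polynomial.natDegree_C]
      refine max_le (by norm_num) ?_
      refine (Polynomial.natDegree_mul_le).trans ?_
      simp [Polynomial.natDegree_X]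
    calc p.natDegree * l.natDegree ≤ n * 1 := Nat.mul_le_mul hp hldeg
      _ = n := by ring
  have hmem : ∀ t ∈ Icc (0:ℝ) 1, a + (b - a) * t ∈ Icc a b := by
    intro t ht
    constructor
    · nlinarith [ht.1, ht.2]
    · nlinarith [ht.1, ht.2]
  have hqM : ∀ y ∈ Icc (0:ℝ) 1, |q.eval y| ≤ M := by
    intro y hy; rw [hqeval]; exact hM _ (hmem y hy)
  have hqd : Polynomial.derivative q = Polynomial.C (b - a) * (Polynomial.derivative p).comp l := by
    rw [hq, Polynomial.derivative_comp]
    congr 1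
    simp [hl]
  set t := (x - a) / (b - a) with ht
  have htmem : t ∈ Icc (0:ℝ) 1 := by
    constructor
    · apply div_nonneg (by linarith [hx.1]) hba.le
    · rw [div_le_one hba]; linarith [hx.2]
  have harg : a + (b - a) * t = x := by rw [ht, mul_div_cancel₀ _ hba.ne']; ring
  have hkey := hMk q hqdeg M hqM t htmem
  rw [hqd] at hkey
  have hkey2 : |(b - a) * (Polynomial.derivative p).eval x| ≤ C0 * M := by
    have : (Polynomial.C (b-a) * (Polynomial.derivative p).comp l).eval t
        = (b - a) * (Polynomial.derivative p).eval x := by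
      simp [Polynomial.eval_comp, hleval, harg]
    rwa [this] at hkey
  rw [abs_mul, abs_of_pos hba] at hkey2
  rw [div_mul_eq_mul_div, le_div_iff₀ hba]
  linarith
end SW18
namespace SW18
open MeasureTheory Set

variable {r μ : ℕ} {c : ℝ} {D : Disc c}

/-- Derivative bound for splines close to a Lipschitz function, away from the knots. -/
lemma sp_deriv_bound {CM : ℝ}
    (hMk : ∀ p : Polynomial ℝ, p.natDegree ≤ r - 1 →
      ∀ a b : ℝ, a < b → ∀ M : ℝ, (∀ y ∈ Icc a b, |p.eval y| ≤ M) →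
      ∀ x ∈ Icc a b, |(Polynomial.derivative p).eval x| ≤ CM / (b - a) * M)
    (hCM : 0 ≤ CM) (hc : 0 < c)
    {φ g : ℝ → ℝ} (hφ : φ ∈ Sp r μ D) {Kg δ : ℝ} (hKg : 0 ≤ Kg) (hδ : 0 ≤ δ)
    (hg : ∀ x ∈ Icc (0:ℝ) 1, ∀ y ∈ Icc (0:ℝ) 1, |g x - g y| ≤ Kg * |x - y|)
    (hcl : ∀ x ∈ Icc (0:ℝ) 1, |φ x - g x| ≤ δ) :
    ∀ x ∈ Ioo (0:ℝ) 1 \ Set.range D.pt,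
      |deriv φ x| ≤ CM / (c * D.h) * (δ + Kg * D.h) := by
  intro x hx
  obtain ⟨hx1, hx2⟩ := hx
  obtain ⟨i, hi⟩ := disc_cover (Ioo_subset_Icc_self hx1)
  obtain ⟨p, hp1, hp2⟩ := hφ.2 i
  set a := D.pt i.castSucc with ha
  set b := D.pt i.succ with hb
  have hab : a < b := D.mono (Fin.castSucc_lt_succ (i := i))
  have hxo : x ∈ Ioo a b := by
    refine ⟨lt_of_le_of_ne hi.1 ?_, lt_of_le_of_ne hi.2 ?_⟩
    · exact fun h => hx2 ⟨i.castSucc, h⟩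
    · exact fun h => hx2 ⟨i.succ, h.symm⟩
  have hsub : Icc a b ⊆ Icc (0:ℝ) 1 := fun y hy =>
    ⟨(disc_pt_mem i.castSucc).1.trans hy.1, hy.2.trans (disc_pt_mem i.succ).2⟩
  set p' : Polynomial ℝ := p - Polynomial.C (g a) with hp'
  have hp'd : p'.natDegree ≤ r - 1 := by
    refine (Polynomial.natDegree_sub_le _ _).trans (max_le hp1 ?_)
    simp
  have hderiv : deriv φ x = (Polynomial.derivative p').eval x := by
    have hev : φ =ᶠ[nhds x] fun t => p.eval t := by
      filter_upwards [isOpen_Ioo.mem_nhds hxo] with y hy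
      exact hp2 y (Ioo_subset_Icc_self hy)
    rw [hev.deriv_eq, Polynomial.deriv]
    congr 1
    rw [hp']
    simp
  have hba : b - a ≤ D.h := D.len_le i
  have hpM : ∀ y ∈ Icc a b, |p'.eval y| ≤ δ + Kg * D.h := by
    intro y hy
    have h1 : |φ y - g y| ≤ δ := hcl y (hsub hy)
    have h2 : |g y - g a| ≤ Kg * |y - a| := hg y (hsub hy) a (hsub ⟨le_refl a, hab.le⟩)
    have h3 : |y - a| ≤ D.h := by
      rw [abs_of_nonneg (by linarith [hy.1])]
      linarith [hy.2]
    have h4 : p'.eval y = (φ y - g y) + (g y - g a) := by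
      rw [hp']
      simp [← hp2 y hy]
    rw [h4]
    refine (abs_add_le _ _).trans ?_
    have : Kg * |y - a| ≤ Kg * D.h := mul_le_mul_of_nonneg_left h3 hKg
    linarith
  rw [hderiv]
  refine (hMk p' hp'd a b hab _ hpM x (Ioo_subset_Icc_self hxo)).trans ?_
  gcongr
  · have := D.h_pos; positivity
  · exact mul_pos hc D.h_pos
  · exact D.quasi i

/-- Iterated x-derivatives of slices of a smooth function of (t,x) are jointly smooth. -/
lemma slice_iteratedDeriv (F : ℝ × ℝ → ℝ) (hF : ContDiff ℝ (⊤ : ℕ∞) F) (j : ℕ) :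
    ∃ G : ℝ × ℝ → ℝ, ContDiff ℝ (⊤ : ℕ∞) G ∧
      ∀ t x, iteratedDeriv j (fun y => F (t, y)) x = G (t, x) := by
  induction j with
  | zero => exact ⟨F, hF, fun t x => by simp⟩
  | succ j ih =>
    obtain ⟨G, hG, hEq⟩ := ih
    refine ⟨fun p => fderiv ℝ G p (0, 1), ?_, ?_⟩
    · have h1 : ContDiff ℝ (⊤ : ℕ∞) (fderiv ℝ G) := hG.fderiv_right (by simp)
      exact (ContinuousLinearMap.apply ℝ ℝ (((0:ℝ),(1:ℝ)) : ℝ × ℝ)).contDiff.comp h1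
    · intro t x
      rw [iteratedDeriv_succ, funext (hEq t)]
      have h1 : HasFDerivAt G (fderiv ℝ G (t, x)) (t, x) :=
        (hG.differentiable (by simp) (t, x)).hasFDerivAt
      have h2 : HasDerivAt (fun y => ((t, y) : ℝ × ℝ)) (((0:ℝ), (1:ℝ)) : ℝ × ℝ) x :=
        HasDerivAt.prodMk (hasDerivAt_const x t) (hasDerivAt_id x)
      exact (h1.comp_hasDerivAt x h2).deriv

/-- Uniform bound for slices and their x-derivatives up to order `s`. -/
lemma slice_bounds (F : ℝ × ℝ → ℝ) (hF : ContDiff ℝ (⊤ : ℕ∞) F) (T : ℝ) (s : ℕ) :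
    ∃ K : ℝ, 0 ≤ K ∧ ∀ t ∈ Icc (0:ℝ) T, ∀ j ≤ s, ∀ x ∈ Icc (0:ℝ) 1,
      |iteratedDeriv j (fun y => F (t, y)) x| ≤ K := by
  have hch : ∀ j : ℕ, ∃ Bj : ℝ, 0 ≤ Bj ∧ ∀ t ∈ Icc (0:ℝ) T, ∀ x ∈ Icc (0:ℝ) 1,
      |iteratedDeriv j (fun y => F (t, y)) x| ≤ Bj := by
    intro j
    obtain ⟨G, hG, hEq⟩ := slice_iteratedDeriv F hF j
    obtain ⟨B, hB⟩ := (isCompact_Icc.prod isCompact_Icc).exists_bound_of_continuousOn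
      (hG.continuous.continuousOn (s := Icc (0:ℝ) T ×ˢ Icc (0:ℝ) 1))
    refine ⟨|B|, abs_nonneg _, fun t ht x hx => ?_⟩
    rw [hEq t x]
    exact (by simpa using hB (t, x) ⟨ht, hx⟩ : |G (t,x)| ≤ B).trans (le_abs_self B)
  choose B hB0 hB using hch
  refine ⟨∑ j ∈ Finset.range (s+1), B j, Finset.sum_nonneg fun j _ => hB0 j, ?_⟩
  intro t ht j hj x hx
  refine (hB j t ht x hx).trans ?_
  exact Finset.single_le_sum (fun i _ => hB0 i) (Finset.mem_range.mpr (Nat.lt_succ_of_le hj))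

end SW18
namespace SW18
open MeasureTheory Set

lemma L2_sub_comm (f g : ℝ → ℝ) : L2 (fun x => f x - g x) = L2 (fun x => g x - f x) := by
  unfold L2
  congr 1
  exact intervalIntegral.integral_congr fun x _ => by ring

lemma L2_deriv_add {f g : ℝ → ℝ} (rf : Reg f) (rg : Reg g) {mf mg : ℝ}
    (hf : L2 (deriv f) ≤ mf) (hg : L2 (deriv g) ≤ mg) :
    L2 (deriv (fun x => f x + g x)) ≤ mf + mg := by
  have hc : L2 (deriv (fun x => f x + g x)) = L2 (fun x => deriv f x + deriv g x) :=
    L2_congr' ∅ countable_empty fun x hx => deriv_add (rf.diff x hx.1) (rg.diff x hx.1)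
  rw [hc]
  exact (L2_add_le rf.nb_deriv rg.nb_deriv).trans (add_le_add hf hg)

lemma L2_dmul {a χ : ℝ → ℝ} (ra : Reg a) (rχ : Reg χ) {A m m' : ℝ}
    (hA : 0 ≤ A) (E : Set ℝ) (hE : E.Countable)
    (hab : ∀ x ∈ Icc (0:ℝ) 1, |a x| ≤ A) (had : ∀ x ∈ Ioo (0:ℝ) 1 \ E, |deriv a x| ≤ A)
    (hm : L2 χ ≤ m) (hm' : L2 (deriv χ) ≤ m') :
    L2 (deriv (fun x => a x * χ x)) ≤ A * (m + m') := by
  have hc : L2 (deriv (fun x => a x * χ x)) =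
      L2 (fun x => deriv a x * χ x + a x * deriv χ x) :=
    L2_congr' ∅ countable_empty fun x hx => ra.deriv_mul rχ hx.1
  rw [hc]
  have h1 : L2 (fun x => deriv a x * χ x) ≤ A * L2 χ :=
    L2_weight_le ra.nb_deriv rχ.nb A hA E hE had
  have h2 : L2 (fun x => a x * deriv χ x) ≤ A * L2 (deriv χ) :=
    L2_weight_le ra.nb rχ.nb_deriv A hA ∅ countable_empty
      (fun x hx => hab x (Ioo_subset_Icc_self hx.1))
  refine (L2_add_le (ra.nb_deriv.mul rχ.nb) (ra.nb.mul rχ.nb_deriv)).trans ?_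
  have h3 : A * L2 χ ≤ A * m := mul_le_mul_of_nonneg_left hm hA
  have h4 : A * L2 (deriv χ) ≤ A * m' := mul_le_mul_of_nonneg_left hm' hA
  nlinarith

/-- For any `a ∈ S`: `(f, Pw − w) = (f − a, Pw − w)`. -/
lemma ip_proj_diff {S : Set (ℝ → ℝ)} {P : (ℝ → ℝ) → (ℝ → ℝ)}
    (hP : IsL2Proj S P) (hSnb : ∀ f ∈ S, Nb f) {w f a : ℝ → ℝ}
    (hw : Nb w) (hf : Nb f) (ha : a ∈ S) :
    ip f (fun x => P w x - w x) = ip (fun x => f x - a x) (fun x => P w x - w x) := by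
  have hPw : Nb (P w) := hSnb _ (hP.1 w)
  have hd : Nb (fun x => P w x - w x) := hPw.sub hw
  have horth := hP.2.1 w a ha
  rw [ip_sub_left hw hPw (hSnb a ha)] at horth
  have hz : ip a (fun x => P w x - w x) = 0 := by
    rw [ip_comm, ip_sub_left hPw hw (hSnb a ha)]
    linarith [ip_comm a (P w), ip_comm a w]
  rw [ip_sub_left hf (hSnb a ha) hd, hz, sub_zero]

/-- `(f, Pw) = (f, w) + (f − a, Pw − w)` for any `a ∈ S`. -/
lemma ip_proj_split {S : Set (ℝ → ℝ)} {P : (ℝ → ℝ) → (ℝ → ℝ)}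
    (hP : IsL2Proj S P) (hSnb : ∀ f ∈ S, Nb f) {w f a : ℝ → ℝ}
    (hw : Nb w) (hf : Nb f) (ha : a ∈ S) :
    ip f (P w) = ip f w + ip (fun x => f x - a x) (fun x => P w x - w x) := by
  rw [← ip_proj_diff hP hSnb hw hf ha, ip_sub_right (hSnb _ (hP.1 w)) hw hf]
  ring

lemma ftc_pair {a g : ℝ → ℝ} (ra : Reg a) (rg : Reg g) (h1 : a 1 = 0) (h0 : a 0 = 0) :
    ip (fun x => deriv a x * g x) g + 2 * ip (fun x => a x * g x) (deriv g) = 0 := by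
  have hf := (ra.mul (rg.mul rg)).ftc
  have hend : a 1 * (g 1 * g 1) - a 0 * (g 0 * g 0) = 0 := by rw [h1, h0]; ring
  rw [hend] at hf
  have hbr : (∫ x in (0:ℝ)..1, deriv (fun y => a y * (g y * g y)) x)
      = ∫ x, deriv (fun y => a y * (g y * g y)) x ∂m01 :=
    intervalIntegral.integral_of_le (zero_le_one' ℝ)
  have hpoint : ∀ x ∈ Ioo (0:ℝ) 1 \ (∅ : Set ℝ),
      deriv a x * g x * g x + 2 * (a x * g x * deriv g x)
        = deriv (fun y => a y * (g y * g y)) x := by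
    intro x hx
    rw [ra.deriv_mul (rg.mul rg) hx.1, rg.deriv_mul rg hx.1]
    ring
  have hsum : ip (fun x => deriv a x * g x) g + 2 * ip (fun x => a x * g x) (deriv g)
      = ∫ x, deriv (fun y => a y * (g y * g y)) x ∂m01 := by
    rw [ip_eq_m01, ip_eq_m01, ← integral_const_mul,
      ← integral_add (((ra.nb_deriv.mul rg.nb).mul rg.nb).int_m01)
        (((Nb.const 2).mul ((ra.nb.mul rg.nb).mul rg.nb_deriv)).int_m01)]
    refine integral_congr_ae ?_
    filter_upwards [ae_m01_of_Ioo ∅ countable_empty hpoint] with x hx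
    exact hx
  rw [hsum, ← hbr, hf]

lemma ftc_triple {a b g : ℝ → ℝ} (ra : Reg a) (rb : Reg b) (rg : Reg g)
    (h1 : b 1 = 0) (h0 : b 0 = 0) :
    ip (fun x => deriv a x * b x * g x) g + ip (fun x => a x * deriv b x * g x) g
      + 2 * ip (fun x => a x * b x * g x) (deriv g) = 0 := by
  have hf := ((ra.mul rb).mul (rg.mul rg)).ftc
  have hend : a 1 * b 1 * (g 1 * g 1) - a 0 * b 0 * (g 0 * g 0) = 0 := by rw [h1, h0]; ring
  rw [hend] at hf
  have hbr : (∫ x in (0:ℝ)..1, deriv (fun y => a y * b y * (g y * g y)) x)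
      = ∫ x, deriv (fun y => a y * b y * (g y * g y)) x ∂m01 :=
    intervalIntegral.integral_of_le (zero_le_one' ℝ)
  have hpoint : ∀ x ∈ Ioo (0:ℝ) 1 \ (∅ : Set ℝ),
      deriv a x * b x * g x * g x + a x * deriv b x * g x * g x
          + 2 * (a x * b x * g x * deriv g x)
        = deriv (fun y => a y * b y * (g y * g y)) x := by
    intro x hx
    rw [(ra.mul rb).deriv_mul (rg.mul rg) hx.1, rg.deriv_mul rg hx.1, ra.deriv_mul rb hx.1]
    ring
  have hsum : ip (fun x => deriv a x * b x * g x) g + ip (fun x => a x * deriv b x * g x) g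
      + 2 * ip (fun x => a x * b x * g x) (deriv g)
      = ∫ x, deriv (fun y => a y * b y * (g y * g y)) x ∂m01 := by
    rw [ip_eq_m01, ip_eq_m01, ip_eq_m01, ← integral_const_mul,
      ← integral_add ((((ra.nb_deriv.mul rb.nb).mul rg.nb).mul rg.nb).int_m01)
        ((((ra.nb.mul rb.nb_deriv).mul rg.nb).mul rg.nb).int_m01),
      ← integral_add (((((ra.nb_deriv.mul rb.nb).mul rg.nb).mul rg.nb).add
          (((ra.nb.mul rb.nb_deriv).mul rg.nb).mul rg.nb)).int_m01)
        (((Nb.const 2).mul (((ra.nb.mul rb.nb).mul rg.nb).mul rg.nb_deriv)).int_m01)]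
    refine integral_congr_ae ?_
    filter_upwards [ae_m01_of_Ioo ∅ countable_empty hpoint] with x hx
    exact hx
  rw [hsum, ← hbr, hf]

end SW18
namespace SW18
open MeasureTheory Set

set_option maxHeartbeats 1000000 in
lemma core {r μ : ℕ} {c : ℝ} {D : Disc c} {P P0 : (ℝ → ℝ) → (ℝ → ℝ)}
    (hμ1 : 1 ≤ μ) (hc : 0 < c)
    (hP : IsL2Proj (Sp r μ D) P) (hP0 : IsL2Proj (Sp0 r μ D) P0)
    {Ci' : ℝ} (hCi' : 0 ≤ Ci')
    (hinv : ∀ χ ∈ Sp r μ D, L2 (deriv χ) ≤ Ci' / D.h * L2 χ)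
    (hinv0 : ∀ χ ∈ Sp0 r μ D, L2 (deriv χ) ≤ Ci' / D.h * L2 χ)
    {Hn Un : ℝ → ℝ} (hHn : Hn ∈ Sp r μ D) (hUn : Un ∈ Sp0 r μ D)
    {KB : ℝ} (hKB : 0 ≤ KB)
    (hHb : ∀ x ∈ Icc (0:ℝ) 1, |Hn x| ≤ KB) (hUb : ∀ x ∈ Icc (0:ℝ) 1, |Un x| ≤ KB)
    (hHd : ∀ x ∈ Ioo (0:ℝ) 1 \ Set.range D.pt, |deriv Hn x| ≤ KB)
    (hUd : ∀ x ∈ Ioo (0:ℝ) 1 \ Set.range D.pt, |deriv Un x| ≤ KB)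
    {Ks : ℝ} (hKs : 0 ≤ Ks)
    (hsup : ∀ ξ ∈ Sp0 r μ D,
      L2 (fun x => (1 + Hn x) * ξ x - P0 (fun y => (1 + Hn y) * ξ y) x) ≤ Ks * D.h * L2 ξ)
    {eps e : ℝ → ℝ} (heps : eps ∈ Sp r μ D) (he : e ∈ Sp0 r μ D) :
    |1 / 3 * (ip eps (P (deriv (rhoPair P P0 Hn Un eps e 2).1))
          + ip (fun x => (1 + Hn x) * e x) (P0 (deriv (rhoPair P P0 Hn Un eps e 2).2)))
        + ip (P (deriv (rhoPair P P0 Hn Un eps e 0).1)) (P (deriv (rhoPair P P0 Hn Un eps e 1).1))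
        + ip (fun x => (1 + Hn x) * P0 (deriv (rhoPair P P0 Hn Un eps e 0).2) x)
            (P0 (deriv (rhoPair P P0 Hn Un eps e 1).2))|
      ≤ 16 * ((1+KB)^2 * (2*(1+KB)*(1/c + Ci'))^2 + Ks*(2*(1+KB)*(1/c + Ci'))^3 + 1)
          / D.h ^ 2 * ((L2 eps) ^ 2 + (L2 e) ^ 2) := by
  have hh : 0 < D.h := D.h_pos
  have hch1 : c * D.h ≤ 1 := by
    have hq := D.quasi 0
    have m1 := disc_pt_mem (D := D) ((0 : Fin (D.N+1)).succ)
    have m2 := disc_pt_mem (D := D) ((0 : Fin (D.N+1)).castSucc)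
    have := m1.2; have := m2.1
    linarith
  -- abbreviations
  set R0 : ℝ → ℝ := (rhoPair P P0 Hn Un eps e 0).1 with hR0
  set S0 : ℝ → ℝ := (rhoPair P P0 Hn Un eps e 0).2 with hS0
  set p0 : ℝ → ℝ := P (deriv R0) with hp0
  set q0 : ℝ → ℝ := P0 (deriv S0) with hq0
  set R1 : ℝ → ℝ := (rhoPair P P0 Hn Un eps e 1).1 with hR1
  set S1 : ℝ → ℝ := (rhoPair P P0 Hn Un eps e 1).2 with hS1
  set p1 : ℝ → ℝ := P (deriv R1) with hp1
  set q1 : ℝ → ℝ := P0 (deriv S1) with hq1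
  set R2 : ℝ → ℝ := (rhoPair P P0 Hn Un eps e 2).1 with hR2
  set S2 : ℝ → ℝ := (rhoPair P P0 Hn Un eps e 2).2 with hS2
  set p2 : ℝ → ℝ := P (deriv R2) with hp2
  set q2 : ℝ → ℝ := P0 (deriv S2) with hq2
  -- memberships
  have hmp0 : p0 ∈ Sp r μ D := hP.1 _
  have hmq0 : q0 ∈ Sp0 r μ D := hP0.1 _
  have hmp1 : p1 ∈ Sp r μ D := hP.1 _
  have hmq1 : q1 ∈ Sp0 r μ D := hP0.1 _
  have hmp2 : p2 ∈ Sp r μ D := hP.1 _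
  have hmq2 : q2 ∈ Sp0 r μ D := hP0.1 _
  have eR0 : R0 = fun x => (1 + Hn x) * e x + Un x * eps x := rfl
  have eS0 : S0 = fun x => eps x + Un x * e x := rfl
  have eR1 : R1 = fun x => (1 + Hn x) * q0 x + Un x * p0 x := rfl
  have eS1 : S1 = fun x => p0 x + Un x * q0 x := rfl
  have eR2 : R2 = fun x => (1 + Hn x) * q1 x + Un x * p1 x := rfl
  have eS2 : S2 = fun x => p1 x + Un x * q1 x := rfl
  have snb : ∀ f ∈ Sp r μ D, Nb f := fun f hf => (sp_reg hμ1 hf).nb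
  have snb0 : ∀ f ∈ Sp0 r μ D, Nb f := fun f hf => (sp0_reg hμ1 hf).nb
  -- regularity
  have rHn : Reg Hn := sp_reg hμ1 hHn
  have rUn : Reg Un := sp0_reg hμ1 hUn
  have reps : Reg eps := sp_reg hμ1 heps
  have re : Reg e := sp0_reg hμ1 he
  have rω : Reg (fun x => 1 + Hn x) := (Reg.const 1).add rHn
  have rp0 : Reg p0 := sp_reg hμ1 hmp0
  have rq0 : Reg q0 := sp0_reg hμ1 hmq0
  have rp1 : Reg p1 := sp_reg hμ1 hmp1
  have rq1 : Reg q1 := sp0_reg hμ1 hmq1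
  have rR0 : Reg R0 := by rw [eR0]; exact (rω.mul re).add (rUn.mul reps)
  have rS0 : Reg S0 := by rw [eS0]; exact reps.add (rUn.mul re)
  have rR1 : Reg R1 := by rw [eR1]; exact (rω.mul rq0).add (rUn.mul rp0)
  have rS1 : Reg S1 := by rw [eS1]; exact rp0.add (rUn.mul rq0)
  have rR2 : Reg R2 := by rw [eR2]; exact (rω.mul rq1).add (rUn.mul rp1)
  have rS2 : Reg S2 := by rw [eS2]; exact rp1.add (rUn.mul rq1)
  -- sup bounds
  set A : ℝ := 1 + KB with hA
  have hA1 : 1 ≤ A := by simp [hA]; linarith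
  have hA0 : 0 ≤ A := by linarith
  have hωb : ∀ x ∈ Icc (0:ℝ) 1, |1 + Hn x| ≤ A := fun x hx =>
    (abs_add_le _ _).trans (by simp [hA]; linarith [hHb x hx])
  have hωd : ∀ x ∈ Ioo (0:ℝ) 1 \ Set.range D.pt, |deriv (fun y => 1 + Hn y) x| ≤ A := by
    intro x hx
    rw [deriv_const_add'']
    exact (hHd x hx).trans (by linarith)
  have hUb' : ∀ x ∈ Icc (0:ℝ) 1, |Un x| ≤ A := fun x hx => (hUb x hx).trans (by linarith)
  have hUd' : ∀ x ∈ Ioo (0:ℝ) 1 \ Set.range D.pt, |deriv Un x| ≤ A := fun x hx =>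
    (hUd x hx).trans (by linarith)
  -- the ladder
  set d : ℝ := Ci' / D.h with hd
  have hd0 : 0 ≤ d := by positivity
  set Q : ℝ := L2 eps + L2 e with hQ
  have hQ0 : 0 ≤ Q := add_nonneg (L2_nonneg _) (L2_nonneg _)
  set s : ℝ := 2 * A * (1 + d) with hs
  have hs0 : 0 ≤ s := by positivity
  have hkey1 : 2 * (A * (1 + d)) ≤ s := le_of_eq (by rw [hs]; ring)
  have hkey2 : d + A * (1 + d) ≤ s := by
    rw [hs]
    nlinarith [mul_nonneg (sub_nonneg.2 hA1) hd0]
  have heQ : L2 eps ≤ Q := le_add_of_nonneg_right (L2_nonneg _)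
  have heQ' : L2 e ≤ Q := le_add_of_nonneg_left (L2_nonneg _)
  have hde : L2 (deriv eps) ≤ d * Q := (hinv eps heps).trans
    (mul_le_mul_of_nonneg_left heQ hd0)
  have hde' : L2 (deriv e) ≤ d * Q := (hinv0 e he).trans
    (mul_le_mul_of_nonneg_left heQ' hd0)
  set E : Set ℝ := Set.range D.pt with hE
  have hEc : E.Countable := knots_countable
  -- level 1
  have hdR0 : L2 (deriv R0) ≤ s * Q := by
    rw [eR0]
    have h1 : L2 (deriv (fun x => (1 + Hn x) * e x)) ≤ A * (Q + d * Q) :=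
      L2_dmul rω re hA0 E hEc hωb hωd heQ' hde'
    have h2 : L2 (deriv (fun x => Un x * eps x)) ≤ A * (Q + d * Q) :=
      L2_dmul rUn reps hA0 E hEc hUb' hUd' heQ hde
    refine (L2_deriv_add (rω.mul re) (rUn.mul reps) h1 h2).trans ?_
    calc A * (Q + d * Q) + A * (Q + d * Q) = 2 * (A * (1 + d)) * Q := by ring
      _ ≤ s * Q := mul_le_mul_of_nonneg_right hkey1 hQ0
  have hdS0 : L2 (deriv S0) ≤ s * Q := by
    rw [eS0]
    have h2 : L2 (deriv (fun x => Un x * e x)) ≤ A * (Q + d * Q) :=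
      L2_dmul rUn re hA0 E hEc hUb' hUd' heQ' hde'
    refine (L2_deriv_add reps (rUn.mul re) hde h2).trans ?_
    calc d * Q + A * (Q + d * Q) = (d + A * (1 + d)) * Q := by ring
      _ ≤ s * Q := mul_le_mul_of_nonneg_right hkey2 hQ0
  have hp0n : L2 p0 ≤ s * Q := (proj_L2_le hP snb rR0.nb_deriv).trans hdR0
  have hq0n : L2 q0 ≤ s * Q := (proj_L2_le hP0 snb0 rS0.nb_deriv).trans hdS0
  have hp0' : L2 (deriv p0) ≤ d * (s * Q) := (hinv p0 hmp0).trans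
    (mul_le_mul_of_nonneg_left hp0n hd0)
  have hq0' : L2 (deriv q0) ≤ d * (s * Q) := (hinv0 q0 hmq0).trans
    (mul_le_mul_of_nonneg_left hq0n hd0)
  -- level 2
  have hdR1 : L2 (deriv R1) ≤ s * (s * Q) := by
    rw [eR1]
    have h1 : L2 (deriv (fun x => (1 + Hn x) * q0 x)) ≤ A * (s * Q + d * (s * Q)) :=
      L2_dmul rω rq0 hA0 E hEc hωb hωd hq0n hq0'
    have h2 : L2 (deriv (fun x => Un x * p0 x)) ≤ A * (s * Q + d * (s * Q)) :=
      L2_dmul rUn rp0 hA0 E hEc hUb' hUd' hp0n hp0'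
    refine (L2_deriv_add (rω.mul rq0) (rUn.mul rp0) h1 h2).trans ?_
    calc A * (s * Q + d * (s * Q)) + A * (s * Q + d * (s * Q))
        = 2 * (A * (1 + d)) * (s * Q) := by ring
      _ ≤ s * (s * Q) := mul_le_mul_of_nonneg_right hkey1 (mul_nonneg hs0 hQ0)
  have hdS1 : L2 (deriv S1) ≤ s * (s * Q) := by
    rw [eS1]
    have h2 : L2 (deriv (fun x => Un x * q0 x)) ≤ A * (s * Q + d * (s * Q)) :=
      L2_dmul rUn rq0 hA0 E hEc hUb' hUd' hq0n hq0'
    refine (L2_deriv_add rp0 (rUn.mul rq0) hp0' h2).trans ?_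
    calc d * (s * Q) + A * (s * Q + d * (s * Q)) = (d + A * (1 + d)) * (s * Q) := by ring
      _ ≤ s * (s * Q) := mul_le_mul_of_nonneg_right hkey2 (mul_nonneg hs0 hQ0)
  have hp1n : L2 p1 ≤ s * (s * Q) := (proj_L2_le hP snb rR1.nb_deriv).trans hdR1
  have hq1n : L2 q1 ≤ s * (s * Q) := (proj_L2_le hP0 snb0 rS1.nb_deriv).trans hdS1
  have hq1' : L2 (deriv q1) ≤ d * (s * (s * Q)) := (hinv0 q1 hmq1).trans
    (mul_le_mul_of_nonneg_left hq1n hd0)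
  have hp1' : L2 (deriv p1) ≤ d * (s * (s * Q)) := (hinv p1 hmp1).trans
    (mul_le_mul_of_nonneg_left hp1n hd0)
  -- level 3
  have hdS2 : L2 (deriv S2) ≤ s * (s * (s * Q)) := by
    rw [eS2]
    have h2 : L2 (deriv (fun x => Un x * q1 x)) ≤ A * (s * (s * Q) + d * (s * (s * Q))) :=
      L2_dmul rUn rq1 hA0 E hEc hUb' hUd' hq1n hq1'
    refine (L2_deriv_add rp1 (rUn.mul rq1) hp1' h2).trans ?_
    calc d * (s * (s * Q)) + A * (s * (s * Q) + d * (s * (s * Q)))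
        = (d + A * (1 + d)) * (s * (s * Q)) := by ring
      _ ≤ s * (s * (s * Q)) :=
          mul_le_mul_of_nonneg_right hkey2 (mul_nonneg hs0 (mul_nonneg hs0 hQ0))
  have hq2n : L2 q2 ≤ s * (s * (s * Q)) := (proj_L2_le hP0 snb0 rS2.nb_deriv).trans hdS2
  -- extra Nb facts
  have nωe : Nb (fun x => (1 + Hn x) * e x) := (rω.mul re).nb
  have nωq0 : Nb (fun x => (1 + Hn x) * q0 x) := (rω.mul rq0).nb
  have nωq1 : Nb (fun x => (1 + Hn x) * q1 x) := (rω.mul rq1).nb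
  have nUp1 : Nb (fun x => Un x * p1 x) := (rUn.mul rp1).nb
  have nUq1 : Nb (fun x => Un x * q1 x) := (rUn.mul rq1).nb
  -- atoms
  set T1 : ℝ := ip (fun x => deriv Un x * p0 x) p0 with hT1
  set T3 : ℝ := ip (fun x => deriv Hn x * Un x * q0 x) q0 with hT3
  set T4 : ℝ := ip (fun x => (1 + Hn x) * deriv Un x * q0 x) q0 with hT4
  set G1 : ℝ := ip (fun x => deriv Un x * eps x) p1 with hG1
  set G2 : ℝ := ip (fun x => deriv Un x * e x) (fun x => (1 + Hn x) * q1 x) with hG2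
  set G3 : ℝ := ip (fun x => deriv Hn x * e x) (fun x => Un x * q1 x) with hG3
  set E1 : ℝ := ip (fun x => (1 + Hn x) * e x - P0 (fun y => (1 + Hn y) * e y) x)
      (fun x => q2 x - deriv S2 x) with hE1
  set E2 : ℝ := ip (fun x => (1 + Hn x) * q1 x - P0 (fun y => (1 + Hn y) * q1 y) x)
      (fun x => q0 x - deriv S0 x) with hE2
  set E3 : ℝ := ip (fun x => (1 + Hn x) * q0 x - P0 (fun y => (1 + Hn y) * q0 y) x)
      (fun x => q1 x - deriv S1 x) with hE3
  -- Step A : (eps, p2) = (eps, R2')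
  have stA : ip eps p2 = ip eps (deriv R2) := proj_ip_right hP snb rR2.nb_deriv heps
  -- Step B : (ωe, q2) = (ωe, S2') + E1
  have stB : ip (fun x => (1 + Hn x) * e x) q2
      = ip (fun x => (1 + Hn x) * e x) (deriv S2) + E1 :=
    ip_proj_split hP0 snb0 rS2.nb_deriv nωe (hP0.1 (fun y => (1 + Hn y) * e y))
  -- Step C : integration by parts
  have hepsR2 : ip eps (deriv R2) = -(ip (deriv eps) R2) := by
    have h := reps.ibp rR2
    have h1 : R2 1 = 0 := by rw [eR2]; simp [hmq1.2.2, hUn.2.2]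
    have h0 : R2 0 = 0 := by rw [eR2]; simp [hmq1.2.1, hUn.2.1]
    rw [h1, h0] at h
    simp at h
    linarith
  have hsplitR2 : ip (deriv eps) R2 = ip (deriv eps) (fun x => (1 + Hn x) * q1 x)
      + ip (deriv eps) (fun x => Un x * p1 x) := by
    rw [eR2]
    exact ip_add_right nωq1 nUp1 reps.nb_deriv
  have hωeS2 : ip (fun x => (1 + Hn x) * e x) (deriv S2)
      = -(ip (deriv (fun x => (1 + Hn x) * e x)) S2) := by
    have h := (rω.mul re).ibp rS2
    simp only [he.2.1, he.2.2, mul_zero, zero_mul, sub_zero] at h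
    linarith
  have hsplitS2 : ip (deriv (fun x => (1 + Hn x) * e x)) S2
      = ip (deriv (fun x => (1 + Hn x) * e x)) p1
      + ip (deriv (fun x => (1 + Hn x) * e x)) (fun x => Un x * q1 x) := by
    rw [eS2]
    exact ip_add_right rp1.nb nUq1 (rω.mul re).nb_deriv
  -- Step D : (p0, p1) = (R0', p1)
  have stD : ip p0 p1 = ip (deriv R0) p1 := by
    have h := proj_ip_right hP snb rR0.nb_deriv hmp1
    rw [ip_comm p0 p1, ip_comm (deriv R0) p1]
    exact h
  have stD' : ip (deriv R0) p1 = ip (deriv (fun x => (1 + Hn x) * e x)) p1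
      + ip (deriv (fun x => Un x * eps x)) p1 := by
    have hd : ∀ x ∈ Ioo (0:ℝ) 1, deriv R0 x
        = deriv (fun x => (1 + Hn x) * e x) x + deriv (fun x => Un x * eps x) x := by
      intro x hx
      rw [eR0]
      exact deriv_add ((rω.mul re).diff x hx) ((rUn.mul reps).diff x hx)
    rw [ip_congr p1 hd]
    exact ip_add_left (rω.mul re).nb_deriv (rUn.mul reps).nb_deriv rp1.nb
  -- Step 7
  have st7 : ip (deriv (fun x => Un x * eps x)) p1
      = G1 + ip (deriv eps) (fun x => Un x * p1 x) := by
    have hd : ∀ x ∈ Ioo (0:ℝ) 1, deriv (fun x => Un x * eps x) x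
        = deriv Un x * eps x + Un x * deriv eps x := fun x hx => rUn.deriv_mul reps hx
    rw [ip_congr p1 hd, ip_add_left (rUn.nb_deriv.mul reps.nb) (rUn.nb.mul reps.nb_deriv)
      rp1.nb, hG1]
    congr 1
    exact ip_eq_of_integrand fun x => by ring
  -- Step E
  have stE : ip (fun x => (1 + Hn x) * q0 x) q1
      = ip (deriv eps) (fun x => (1 + Hn x) * q1 x)
      + ip (deriv (fun x => Un x * e x)) (fun x => (1 + Hn x) * q1 x) + E2 := by
    have h1 : ip (fun x => (1 + Hn x) * q0 x) q1 = ip (fun x => (1 + Hn x) * q1 x) q0 :=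
      ip_eq_of_integrand fun x => by ring
    have h2 : ip (fun x => (1 + Hn x) * q1 x) q0
        = ip (fun x => (1 + Hn x) * q1 x) (deriv S0) + E2 :=
      ip_proj_split hP0 snb0 rS0.nb_deriv nωq1 (hP0.1 (fun y => (1 + Hn y) * q1 y))
    have hd : ∀ x ∈ Ioo (0:ℝ) 1, deriv S0 x
        = deriv eps x + deriv (fun x => Un x * e x) x := by
      intro x hx
      rw [eS0]
      exact deriv_add (reps.diff x hx) ((rUn.mul re).diff x hx)
    rw [h1, h2, ip_comm _ (deriv S0), ip_congr _ hd,
      ip_add_left reps.nb_deriv (rUn.mul re).nb_deriv nωq1]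
  -- Step 8
  have st8a : ip (deriv (fun x => Un x * e x)) (fun x => (1 + Hn x) * q1 x)
      = G2 + ip (fun x => Un x * deriv e x) (fun x => (1 + Hn x) * q1 x) := by
    have hd : ∀ x ∈ Ioo (0:ℝ) 1, deriv (fun x => Un x * e x) x
        = deriv Un x * e x + Un x * deriv e x := fun x hx => rUn.deriv_mul re hx
    rw [ip_congr _ hd, ip_add_left (rUn.nb_deriv.mul re.nb) (rUn.nb.mul re.nb_deriv) nωq1,
      hG2]
  have st8b : ip (deriv (fun x => (1 + Hn x) * e x)) (fun x => Un x * q1 x)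
      = G3 + ip (fun x => Un x * deriv e x) (fun x => (1 + Hn x) * q1 x) := by
    have hd : ∀ x ∈ Ioo (0:ℝ) 1, deriv (fun x => (1 + Hn x) * e x) x
        = deriv Hn x * e x + (1 + Hn x) * deriv e x := by
      intro x hx
      rw [rω.deriv_mul re hx, deriv_const_add'']
    rw [ip_congr _ hd, ip_add_left (rHn.nb_deriv.mul re.nb) (rω.nb.mul re.nb_deriv) nUq1,
      hG3]
    congr 1
    exact ip_eq_of_integrand fun x => by ring
  -- the sum Sigma1
  have hSig : ip eps p2 + ip (fun x => (1 + Hn x) * e x) q2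
      = -(ip p0 p1 + ip (fun x => (1 + Hn x) * q0 x) q1) + G1 + G2 - G3 + E1 + E2 := by
    linarith only [stA, stB, hepsR2, hsplitR2, hωeS2, hsplitS2, stD, stD', st7, stE,
      st8a, st8b]
  -- Step F : reduction of X
  have stF : ip (fun x => (1 + Hn x) * q0 x) q1
      = ip (fun x => (1 + Hn x) * q0 x) (deriv S1) + E3 :=
    ip_proj_split hP0 snb0 rS1.nb_deriv nωq0 (hP0.1 (fun y => (1 + Hn y) * q0 y))
  have hsplitS1 : ip (fun x => (1 + Hn x) * q0 x) (deriv S1)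
      = ip (fun x => (1 + Hn x) * q0 x) (deriv p0)
      + ip (fun x => (1 + Hn x) * q0 x) (deriv (fun x => Un x * q0 x)) := by
    have hd : ∀ x ∈ Ioo (0:ℝ) 1, deriv S1 x
        = deriv p0 x + deriv (fun x => Un x * q0 x) x := by
      intro x hx
      rw [eS1]
      exact deriv_add (rp0.diff x hx) ((rUn.mul rq0).diff x hx)
    rw [ip_comm _ (deriv S1), ip_congr _ hd,
      ip_add_left rp0.nb_deriv (rUn.mul rq0).nb_deriv nωq0,
      ip_comm (deriv p0) _, ip_comm (deriv (fun x => Un x * q0 x)) _]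
  have stD2 : ip p0 p1 = ip p0 (deriv R1) := proj_ip_right hP snb rR1.nb_deriv hmp0
  have hsplitR1 : ip p0 (deriv R1) = ip p0 (deriv (fun x => (1 + Hn x) * q0 x))
      + ip p0 (deriv (fun x => Un x * p0 x)) := by
    have hd : ∀ x ∈ Ioo (0:ℝ) 1, deriv R1 x
        = deriv (fun x => (1 + Hn x) * q0 x) x + deriv (fun x => Un x * p0 x) x := by
      intro x hx
      rw [eR1]
      exact deriv_add ((rω.mul rq0).diff x hx) ((rUn.mul rp0).diff x hx)
    rw [ip_comm _ (deriv R1), ip_congr _ hd,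
      ip_add_left (rω.mul rq0).nb_deriv (rUn.mul rp0).nb_deriv rp0.nb,
      ip_comm (deriv (fun x => (1 + Hn x) * q0 x)) _,
      ip_comm (deriv (fun x => Un x * p0 x)) _]
  have ibp2 : ip (deriv p0) (fun x => (1 + Hn x) * q0 x)
      + ip p0 (deriv (fun x => (1 + Hn x) * q0 x)) = 0 := by
    have h := rp0.ibp (rω.mul rq0)
    simp only [hmq0.2.1, hmq0.2.2, mul_zero, zero_mul, sub_zero] at h
    linarith
  have hcomm2 : ip (deriv p0) (fun x => (1 + Hn x) * q0 x)
      = ip (fun x => (1 + Hn x) * q0 x) (deriv p0) := ip_comm _ _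
  have exp2 : ip p0 (deriv (fun x => Un x * p0 x))
      = T1 + ip (fun x => Un x * p0 x) (deriv p0) := by
    have hd : ∀ x ∈ Ioo (0:ℝ) 1, deriv (fun x => Un x * p0 x) x
        = deriv Un x * p0 x + Un x * deriv p0 x := fun x hx => rUn.deriv_mul rp0 hx
    rw [ip_comm, ip_congr _ hd,
      ip_add_left (rUn.nb_deriv.mul rp0.nb) (rUn.nb.mul rp0.nb_deriv) rp0.nb, hT1]
    congr 1
    exact ip_eq_of_integrand fun x => by ring
  have exp3 : ip (fun x => (1 + Hn x) * q0 x) (deriv (fun x => Un x * q0 x))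
      = T4 + ip (fun x => (1 + Hn x) * Un x * q0 x) (deriv q0) := by
    have hd : ∀ x ∈ Ioo (0:ℝ) 1, deriv (fun x => Un x * q0 x) x
        = deriv Un x * q0 x + Un x * deriv q0 x := fun x hx => rUn.deriv_mul rq0 hx
    rw [ip_comm, ip_congr _ hd,
      ip_add_left (rUn.nb_deriv.mul rq0.nb) (rUn.nb.mul rq0.nb_deriv) nωq0, hT4]
    congr 1
    · exact ip_eq_of_integrand fun x => by ring
    · exact ip_eq_of_integrand fun x => by ring
  have ftc2 : T1 + 2 * ip (fun x => Un x * p0 x) (deriv p0) = 0 := by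
    rw [hT1]
    exact ftc_pair rUn rp0 hUn.2.2 hUn.2.1
  have ftc3 : T3 + T4 + 2 * ip (fun x => (1 + Hn x) * Un x * q0 x) (deriv q0) = 0 := by
    rw [hT3, hT4]
    have h := ftc_triple rω rUn rq0 hUn.2.2 hUn.2.1
    have hc : ip (fun x => deriv (fun y => 1 + Hn y) x * Un x * q0 x) q0
        = ip (fun x => deriv Hn x * Un x * q0 x) q0 :=
      ip_congr q0 (fun x _ => by rw [deriv_const_add''])
    rw [hc] at h
    linarith
  have hX : ip p0 p1 + ip (fun x => (1 + Hn x) * q0 x) q1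
      = 1 / 2 * (T1 + T4 - T3) + E3 := by
    linarith only [stF, hsplitS1, stD2, hsplitR1, ibp2, hcomm2, exp2, exp3, ftc2, ftc3]
  have main_id : 1 / 3 * (ip eps p2 + ip (fun x => (1 + Hn x) * e x) q2)
      + ip p0 p1 + ip (fun x => (1 + Hn x) * q0 x) q1
      = 1 / 3 * (T1 + T4 - T3) + 2 / 3 * E3 + 1 / 3 * (G1 + G2 - G3 + E1 + E2) := by
    linarith only [hSig, hX]
  -- scalar setup for the final bound
  set κ : ℝ := 2 * A * (1/c + Ci') with hκdef
  have hc1 : 0 < 1/c := by positivity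
  have hκ0 : 0 ≤ κ := by
    rw [hκdef]
    exact mul_nonneg (mul_nonneg (by norm_num) hA0) (by linarith)
  have hhc : D.h ≤ 1/c := by
    rw [le_div_iff₀ hc]
    linarith [hch1]
  have hsκ : s ≤ κ / D.h := by
    rw [le_div_iff₀ hh, hs, hκdef, hd]
    have hexp : 2 * A * (1 + Ci'/D.h) * D.h = 2 * A * (D.h + Ci') := by
      field_simp
    rw [hexp]
    have h9 : D.h + Ci' ≤ 1/c + Ci' := by linarith
    exact mul_le_mul_of_nonneg_left h9 (by linarith)
  have hm1κ : s * Q ≤ κ / D.h * Q := mul_le_mul_of_nonneg_right hsκ hQ0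
  have hκh0 : 0 ≤ κ / D.h := div_nonneg hκ0 hh.le
  have hm2κ : s * (s * Q) ≤ κ / D.h * (κ / D.h * Q) :=
    mul_le_mul hsκ hm1κ (mul_nonneg hs0 hQ0) hκh0
  have hm3κ : s * (s * (s * Q)) ≤ κ / D.h * (κ / D.h * (κ / D.h * Q)) :=
    mul_le_mul hsκ hm2κ (mul_nonneg hs0 (mul_nonneg hs0 hQ0)) hκh0
  set W : ℝ := (L2 eps ^ 2 + L2 e ^ 2) / D.h ^ 2 with hW
  have hW0 : 0 ≤ W := by
    rw [hW]
    positivity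
  have hQQW : Q * Q / D.h ^ 2 ≤ 2 * W := by
    have hQ2 : Q * Q ≤ 2 * (L2 eps ^ 2 + L2 e ^ 2) := by
      have h2ab : 2 * L2 eps * L2 e ≤ L2 eps ^ 2 + L2 e ^ 2 := two_mul_le_add_sq _ _
      have hQe : Q * Q = L2 eps ^ 2 + 2 * L2 eps * L2 e + L2 e ^ 2 := by rw [hQ]; ring
      linarith only [h2ab, hQe]
    calc Q * Q / D.h ^ 2 ≤ (2 * (L2 eps ^ 2 + L2 e ^ 2)) / D.h ^ 2 :=
          (div_le_div_iff_of_pos_right (pow_pos hh 2)).2 hQ2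
      _ = 2 * W := by rw [hW]; ring
  set cZ : ℝ := 4 * (A * A * (κ * κ) + Ks * (κ * (κ * κ)) + 1) with hcZ
  have hAAκ : 0 ≤ A * A * (κ * κ) := mul_nonneg (mul_nonneg hA0 hA0) (mul_nonneg hκ0 hκ0)
  have hKκ : 0 ≤ Ks * (κ * (κ * κ)) := mul_nonneg hKs (mul_nonneg hκ0 (mul_nonneg hκ0 hκ0))
  have hcZ0 : 0 ≤ cZ := by rw [hcZ]; linarith only [hAAκ, hKκ]
  have hAleAA : A * (κ * κ) ≤ A * A * (κ * κ) :=
    mul_le_mul_of_nonneg_right (le_mul_of_one_le_left hA0 hA1) (mul_nonneg hκ0 hκ0)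
  have hAκκ0 : 0 ≤ A * (κ * κ) := mul_nonneg hA0 (mul_nonneg hκ0 hκ0)
  have hscal1 : 2 * (A * (κ * κ)) ≤ cZ := by
    rw [hcZ]; linarith only [hAleAA, hKκ, hAAκ, hAκκ0]
  have hscal2 : 2 * (A * A * (κ * κ)) ≤ cZ := by rw [hcZ]; linarith only [hKκ, hAAκ]
  have hscal3 : 4 * (Ks * (κ * (κ * κ))) ≤ cZ := by rw [hcZ]; linarith only [hKκ, hAAκ]
  -- atom bounds
  have nn1 : 0 ≤ s * Q := mul_nonneg hs0 hQ0
  have nn2 : 0 ≤ s * (s * Q) := mul_nonneg hs0 nn1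
  have nn3 : 0 ≤ s * (s * (s * Q)) := mul_nonneg hs0 nn2
  have nnκ1 : 0 ≤ κ / D.h * Q := mul_nonneg hκh0 hQ0
  have nnκ2 : 0 ≤ κ / D.h * (κ / D.h * Q) := mul_nonneg hκh0 nnκ1
  have nnκ3 : 0 ≤ κ / D.h * (κ / D.h * (κ / D.h * Q)) := mul_nonneg hκh0 nnκ2
  -- T1
  have fT1 : |T1| ≤ cZ * W := by
    have wT1 : L2 (fun x => deriv Un x * p0 x) ≤ A * (s * Q) :=
      (L2_weight_le rUn.nb_deriv rp0.nb A hA0 E hEc hUd').trans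
        (mul_le_mul_of_nonneg_left hp0n hA0)
    have bT1 : |T1| ≤ A * (s * Q) * (s * Q) := by
      rw [hT1]
      exact (abs_ip_le (rUn.nb_deriv.mul rp0.nb) rp0.nb).trans
        (mul_le_mul wT1 hp0n (L2_nonneg _) (mul_nonneg hA0 nn1))
    refine bT1.trans ?_
    calc A * (s * Q) * (s * Q) ≤ A * (κ / D.h * Q) * (κ / D.h * Q) :=
          mul_le_mul (mul_le_mul_of_nonneg_left hm1κ hA0) hm1κ nn1
            (mul_nonneg hA0 nnκ1)
      _ = A * (κ * κ) * (Q * Q / D.h ^ 2) := by ring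
      _ ≤ A * (κ * κ) * (2 * W) := mul_le_mul_of_nonneg_left hQQW
            (mul_nonneg hA0 (mul_nonneg hκ0 hκ0))
      _ = 2 * (A * (κ * κ)) * W := by ring
      _ ≤ cZ * W := mul_le_mul_of_nonneg_right hscal1 hW0
  -- T4
  have fT4 : |T4| ≤ cZ * W := by
    have hwb : ∀ x ∈ Ioo (0:ℝ) 1 \ E, |(1 + Hn x) * deriv Un x| ≤ A * A := by
      intro x hx
      rw [abs_mul]
      exact mul_le_mul (hωb x (Ioo_subset_Icc_self hx.1)) (hUd' x hx) (abs_nonneg _) hA0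
    have wT4 : L2 (fun x => (1 + Hn x) * deriv Un x * q0 x) ≤ A * A * (s * Q) :=
      (L2_weight_le (rω.nb.mul rUn.nb_deriv) rq0.nb (A*A) (mul_nonneg hA0 hA0) E hEc hwb).trans
        (mul_le_mul_of_nonneg_left hq0n (mul_nonneg hA0 hA0))
    have bT4 : |T4| ≤ A * A * (s * Q) * (s * Q) := by
      rw [hT4]
      exact (abs_ip_le ((rω.nb.mul rUn.nb_deriv).mul rq0.nb) rq0.nb).trans
        (mul_le_mul wT4 hq0n (L2_nonneg _) (mul_nonneg (mul_nonneg hA0 hA0) nn1))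
    refine bT4.trans ?_
    calc A * A * (s * Q) * (s * Q) ≤ A * A * (κ / D.h * Q) * (κ / D.h * Q) :=
          mul_le_mul (mul_le_mul_of_nonneg_left hm1κ (mul_nonneg hA0 hA0)) hm1κ nn1
            (mul_nonneg (mul_nonneg hA0 hA0) nnκ1)
      _ = A * A * (κ * κ) * (Q * Q / D.h ^ 2) := by ring
      _ ≤ A * A * (κ * κ) * (2 * W) := mul_le_mul_of_nonneg_left hQQW hAAκ
      _ = 2 * (A * A * (κ * κ)) * W := by ring
      _ ≤ cZ * W := mul_le_mul_of_nonneg_right hscal2 hW0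
  -- T3
  have fT3 : |T3| ≤ cZ * W := by
    have hwb : ∀ x ∈ Ioo (0:ℝ) 1 \ E, |deriv Hn x * Un x| ≤ A * A := by
      intro x hx
      rw [abs_mul]
      exact mul_le_mul ((hHd x hx).trans (by linarith)) (hUb' x (Ioo_subset_Icc_self hx.1))
        (abs_nonneg _) hA0
    have wT3 : L2 (fun x => deriv Hn x * Un x * q0 x) ≤ A * A * (s * Q) :=
      (L2_weight_le (rHn.nb_deriv.mul rUn.nb) rq0.nb (A*A) (mul_nonneg hA0 hA0) E hEc hwb).trans
        (mul_le_mul_of_nonneg_left hq0n (mul_nonneg hA0 hA0))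
    have bT3 : |T3| ≤ A * A * (s * Q) * (s * Q) := by
      rw [hT3]
      exact (abs_ip_le ((rHn.nb_deriv.mul rUn.nb).mul rq0.nb) rq0.nb).trans
        (mul_le_mul wT3 hq0n (L2_nonneg _) (mul_nonneg (mul_nonneg hA0 hA0) nn1))
    refine bT3.trans ?_
    calc A * A * (s * Q) * (s * Q) ≤ A * A * (κ / D.h * Q) * (κ / D.h * Q) :=
          mul_le_mul (mul_le_mul_of_nonneg_left hm1κ (mul_nonneg hA0 hA0)) hm1κ nn1
            (mul_nonneg (mul_nonneg hA0 hA0) nnκ1)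
      _ = A * A * (κ * κ) * (Q * Q / D.h ^ 2) := by ring
      _ ≤ A * A * (κ * κ) * (2 * W) := mul_le_mul_of_nonneg_left hQQW hAAκ
      _ = 2 * (A * A * (κ * κ)) * W := by ring
      _ ≤ cZ * W := mul_le_mul_of_nonneg_right hscal2 hW0
  -- G1
  have fG1 : |G1| ≤ cZ * W := by
    have wG1 : L2 (fun x => deriv Un x * eps x) ≤ A * Q :=
      (L2_weight_le rUn.nb_deriv reps.nb A hA0 E hEc hUd').trans
        (mul_le_mul_of_nonneg_left heQ hA0)
    have bG1 : |G1| ≤ A * Q * (s * (s * Q)) := by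
      rw [hG1]
      exact (abs_ip_le (rUn.nb_deriv.mul reps.nb) rp1.nb).trans
        (mul_le_mul wG1 hp1n (L2_nonneg _) (mul_nonneg hA0 hQ0))
    refine bG1.trans ?_
    calc A * Q * (s * (s * Q)) ≤ A * Q * (κ / D.h * (κ / D.h * Q)) :=
          mul_le_mul_of_nonneg_left hm2κ (mul_nonneg hA0 hQ0)
      _ = A * (κ * κ) * (Q * Q / D.h ^ 2) := by ring
      _ ≤ A * (κ * κ) * (2 * W) := mul_le_mul_of_nonneg_left hQQW
            (mul_nonneg hA0 (mul_nonneg hκ0 hκ0))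
      _ = 2 * (A * (κ * κ)) * W := by ring
      _ ≤ cZ * W := mul_le_mul_of_nonneg_right hscal1 hW0
  -- G2
  have fG2 : |G2| ≤ cZ * W := by
    have w1 : L2 (fun x => deriv Un x * e x) ≤ A * Q :=
      (L2_weight_le rUn.nb_deriv re.nb A hA0 E hEc hUd').trans
        (mul_le_mul_of_nonneg_left heQ' hA0)
    have w2 : L2 (fun x => (1 + Hn x) * q1 x) ≤ A * (s * (s * Q)) :=
      (L2_weight_le rω.nb rq1.nb A hA0 ∅ countable_empty
        (fun x hx => hωb x (Ioo_subset_Icc_self hx.1))).trans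
        (mul_le_mul_of_nonneg_left hq1n hA0)
    have bG2 : |G2| ≤ A * Q * (A * (s * (s * Q))) := by
      rw [hG2]
      exact (abs_ip_le (rUn.nb_deriv.mul re.nb) nωq1).trans
        (mul_le_mul w1 w2 (L2_nonneg _) (mul_nonneg hA0 hQ0))
    refine bG2.trans ?_
    calc A * Q * (A * (s * (s * Q))) ≤ A * Q * (A * (κ / D.h * (κ / D.h * Q))) :=
          mul_le_mul_of_nonneg_left (mul_le_mul_of_nonneg_left hm2κ hA0)
            (mul_nonneg hA0 hQ0)
      _ = A * A * (κ * κ) * (Q * Q / D.h ^ 2) := by ring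
      _ ≤ A * A * (κ * κ) * (2 * W) := mul_le_mul_of_nonneg_left hQQW hAAκ
      _ = 2 * (A * A * (κ * κ)) * W := by ring
      _ ≤ cZ * W := mul_le_mul_of_nonneg_right hscal2 hW0
  -- G3
  have fG3 : |G3| ≤ cZ * W := by
    have w1 : L2 (fun x => deriv Hn x * e x) ≤ A * Q := by
      refine (L2_weight_le rHn.nb_deriv re.nb A hA0 E hEc
        (fun x hx => (hHd x hx).trans (by linarith))).trans
        (mul_le_mul_of_nonneg_left heQ' hA0)
    have w2 : L2 (fun x => Un x * q1 x) ≤ A * (s * (s * Q)) :=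
      (L2_weight_le rUn.nb rq1.nb A hA0 ∅ countable_empty
        (fun x hx => hUb' x (Ioo_subset_Icc_self hx.1))).trans
        (mul_le_mul_of_nonneg_left hq1n hA0)
    have bG3 : |G3| ≤ A * Q * (A * (s * (s * Q))) := by
      rw [hG3]
      exact (abs_ip_le (rHn.nb_deriv.mul re.nb) nUq1).trans
        (mul_le_mul w1 w2 (L2_nonneg _) (mul_nonneg hA0 hQ0))
    refine bG3.trans ?_
    calc A * Q * (A * (s * (s * Q))) ≤ A * Q * (A * (κ / D.h * (κ / D.h * Q))) :=
          mul_le_mul_of_nonneg_left (mul_le_mul_of_nonneg_left hm2κ hA0)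
            (mul_nonneg hA0 hQ0)
      _ = A * A * (κ * κ) * (Q * Q / D.h ^ 2) := by ring
      _ ≤ A * A * (κ * κ) * (2 * W) := mul_le_mul_of_nonneg_left hQQW hAAκ
      _ = 2 * (A * A * (κ * κ)) * W := by ring
      _ ≤ cZ * W := mul_le_mul_of_nonneg_right hscal2 hW0
  -- E1
  have fE1 : |E1| ≤ cZ * W := by
    have w1 : L2 (fun x => (1 + Hn x) * e x - P0 (fun y => (1 + Hn y) * e y) x)
        ≤ Ks * D.h * Q := (hsup e he).trans
        (mul_le_mul_of_nonneg_left heQ' (mul_nonneg hKs hh.le))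
    have w2 : L2 (fun x => q2 x - deriv S2 x) ≤ 2 * (s * (s * (s * Q))) := by
      refine (L2_sub_le (snb0 _ hmq2) rS2.nb_deriv).trans ?_
      linarith only [hq2n, hdS2]
    have bE1 : |E1| ≤ Ks * D.h * Q * (2 * (s * (s * (s * Q)))) := by
      rw [hE1]
      exact (abs_ip_le (nωe.sub (snb0 _ (hP0.1 (fun y => (1 + Hn y) * e y))))
        ((snb0 _ hmq2).sub rS2.nb_deriv)).trans
        (mul_le_mul w1 w2 (L2_nonneg _) (mul_nonneg (mul_nonneg hKs hh.le) hQ0))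
    refine bE1.trans ?_
    calc Ks * D.h * Q * (2 * (s * (s * (s * Q))))
        ≤ Ks * D.h * Q * (2 * (κ / D.h * (κ / D.h * (κ / D.h * Q)))) := by
          refine mul_le_mul_of_nonneg_left (by linarith only [hm3κ])
            (mul_nonneg (mul_nonneg hKs hh.le) hQ0)
      _ = 2 * (Ks * (κ * (κ * κ))) * (Q * Q / D.h ^ 2) := by
          field_simp
      _ ≤ 2 * (Ks * (κ * (κ * κ))) * (2 * W) := mul_le_mul_of_nonneg_left hQQW
            (by linarith only [hKκ])
      _ = 4 * (Ks * (κ * (κ * κ))) * W := by ring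
      _ ≤ cZ * W := mul_le_mul_of_nonneg_right hscal3 hW0
  -- E2
  have fE2 : |E2| ≤ cZ * W := by
    have w1 : L2 (fun x => (1 + Hn x) * q1 x - P0 (fun y => (1 + Hn y) * q1 y) x)
        ≤ Ks * D.h * (s * (s * Q)) := (hsup q1 hmq1).trans
        (mul_le_mul_of_nonneg_left hq1n (mul_nonneg hKs hh.le))
    have w2 : L2 (fun x => q0 x - deriv S0 x) ≤ 2 * (s * Q) := by
      refine (L2_sub_le (snb0 _ hmq0) rS0.nb_deriv).trans ?_
      linarith only [hq0n, hdS0]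
    have bE2 : |E2| ≤ Ks * D.h * (s * (s * Q)) * (2 * (s * Q)) := by
      rw [hE2]
      exact (abs_ip_le (nωq1.sub (snb0 _ (hP0.1 (fun y => (1 + Hn y) * q1 y))))
        ((snb0 _ hmq0).sub rS0.nb_deriv)).trans
        (mul_le_mul w1 w2 (L2_nonneg _)
          (mul_nonneg (mul_nonneg hKs hh.le) nn2))
    refine bE2.trans ?_
    calc Ks * D.h * (s * (s * Q)) * (2 * (s * Q))
        ≤ Ks * D.h * (κ / D.h * (κ / D.h * Q)) * (2 * (κ / D.h * Q)) :=
          mul_le_mul (mul_le_mul_of_nonneg_left hm2κ (mul_nonneg hKs hh.le))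
            (by linarith only [hm1κ]) (by linarith only [nn1])
            (mul_nonneg (mul_nonneg hKs hh.le) nnκ2)
      _ = 2 * (Ks * (κ * (κ * κ))) * (Q * Q / D.h ^ 2) := by
          field_simp
      _ ≤ 2 * (Ks * (κ * (κ * κ))) * (2 * W) := mul_le_mul_of_nonneg_left hQQW
            (by linarith only [hKκ])
      _ = 4 * (Ks * (κ * (κ * κ))) * W := by ring
      _ ≤ cZ * W := mul_le_mul_of_nonneg_right hscal3 hW0
  -- E3
  have fE3 : |E3| ≤ cZ * W := by
    have w1 : L2 (fun x => (1 + Hn x) * q0 x - P0 (fun y => (1 + Hn y) * q0 y) x)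
        ≤ Ks * D.h * (s * Q) := (hsup q0 hmq0).trans
        (mul_le_mul_of_nonneg_left hq0n (mul_nonneg hKs hh.le))
    have w2 : L2 (fun x => q1 x - deriv S1 x) ≤ 2 * (s * (s * Q)) := by
      refine (L2_sub_le (snb0 _ hmq1) rS1.nb_deriv).trans ?_
      linarith only [hq1n, hdS1]
    have bE3 : |E3| ≤ Ks * D.h * (s * Q) * (2 * (s * (s * Q))) := by
      rw [hE3]
      exact (abs_ip_le (nωq0.sub (snb0 _ (hP0.1 (fun y => (1 + Hn y) * q0 y))))
        ((snb0 _ hmq1).sub rS1.nb_deriv)).trans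
        (mul_le_mul w1 w2 (L2_nonneg _)
          (mul_nonneg (mul_nonneg hKs hh.le) nn1))
    refine bE3.trans ?_
    calc Ks * D.h * (s * Q) * (2 * (s * (s * Q)))
        ≤ Ks * D.h * (κ / D.h * Q) * (2 * (κ / D.h * (κ / D.h * Q))) :=
          mul_le_mul (mul_le_mul_of_nonneg_left hm1κ (mul_nonneg hKs hh.le))
            (by linarith only [hm2κ]) (by linarith only [nn2])
            (mul_nonneg (mul_nonneg hKs hh.le) nnκ1)
      _ = 2 * (Ks * (κ * (κ * κ))) * (Q * Q / D.h ^ 2) := by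
          field_simp
      _ ≤ 2 * (Ks * (κ * (κ * κ))) * (2 * W) := mul_le_mul_of_nonneg_left hQQW
            (by linarith only [hKκ])
      _ = 4 * (Ks * (κ * (κ * κ))) * W := by ring
      _ ≤ cZ * W := mul_le_mul_of_nonneg_right hscal3 hW0
  -- conclusion
  have hfin : |1 / 3 * (T1 + T4 - T3) + 2 / 3 * E3 + 1 / 3 * (G1 + G2 - G3 + E1 + E2)|
      ≤ 4 * (cZ * W) := by
    have h1 := abs_le.1 fT1
    have h2 := abs_le.1 fT4
    have h3 := abs_le.1 fT3
    have h4 := abs_le.1 fG1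
    have h5 := abs_le.1 fG2
    have h6 := abs_le.1 fG3
    have h7 := abs_le.1 fE1
    have h8 := abs_le.1 fE2
    have h9 := abs_le.1 fE3
    have hcw : 0 ≤ cZ * W := mul_nonneg hcZ0 hW0
    rw [abs_le]
    constructor
    · linarith only [h1.1, h1.2, h2.1, h2.2, h3.1, h3.2, h4.1, h4.2, h5.1, h5.2, h6.1,
        h6.2, h7.1, h7.2, h8.1, h8.2, h9.1, h9.2, hcw]
    · linarith only [h1.1, h1.2, h2.1, h2.2, h3.1, h3.2, h4.1, h4.2, h5.1, h5.2, h6.1,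
        h6.2, h7.1, h7.2, h8.1, h8.2, h9.1, h9.2, hcw]
  rw [main_id]
  refine hfin.trans (le_of_eq ?_)
  rw [hcZ, hW, hκdef, hA]
  ring



end SW18
namespace SW18
open MeasureTheory Set

/-- inverse inequality in the form used by `core` -/
lemma inv_form {μ : ℕ} {c Ci : ℝ} {D : Disc c} {S : Set (ℝ → ℝ)}
    (hinv : InvIneq S μ D.h Ci) : ∀ χ ∈ S, L2 (deriv χ) ≤ |Ci| / D.h * L2 χ := by
  intro χ hχ
  have h1 := (hinv χ hχ).1 1 0 (by omega) (by omega)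
  have hHs0 : Hs 0 χ = L2 χ := by
    rw [Hs]
    simp [iteratedDeriv_zero]
    exact Real.sqrt_sq (L2_nonneg χ)
  have hHs1 : L2 (deriv χ) ≤ Hs 1 χ := by
    rw [Hs]
    have : (L2 (deriv χ))^2 ≤ ∑ j ∈ Finset.range 2, L2 (iteratedDeriv j χ) ^ 2 := by
      rw [Finset.sum_range_succ, Finset.sum_range_one, iteratedDeriv_one]
      nlinarith [sq_nonneg (L2 (iteratedDeriv 0 χ))]
    calc L2 (deriv χ) = Real.sqrt ((L2 (deriv χ))^2) :=
          (Real.sqrt_sq (L2_nonneg _)).symm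
      _ ≤ _ := Real.sqrt_le_sqrt this
  rw [hHs0] at h1
  simp only [Nat.sub_zero, pow_one] at h1
  refine hHs1.trans (h1.trans ?_)
  have hh := D.h_pos
  refine mul_le_mul_of_nonneg_right ?_ (L2_nonneg χ)
  exact (div_le_div_iff_of_pos_right hh).2 (le_abs_self Ci)
end SW18

set_option maxHeartbeats 2000000 in
open MeasureTheory Set SW18 in
theorem stmt18' (r μ : ℕ) (hr : 3 ≤ r) (hμ1 : 1 ≤ μ) (hμ2 : μ ≤ r - 2)
    (c Ci Cp Cs T α : ℝ) (hc : 0 < c) (hT : 0 < T) (hα : 0 < α)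
    (η u : ℝ → ℝ → ℝ) (hsol : SWSolution T α η u) :
    ∃ C : ℝ, ∀ (D : Disc c) (P P0 : (ℝ → ℝ) → (ℝ → ℝ)) (k : ℝ) (M : ℕ),
      IsL2Proj (Sp r μ D) P → IsL2Proj (Sp0 r μ D) P0 →
      InvIneq (Sp r μ D) μ D.h Ci → InvIneq (Sp0 r μ D) μ D.h Ci →
      ProjBounds P r D.h Cp → ProjBounds0 P0 r D.h Cp →
      (∀ t ∈ Icc (0:ℝ) T, ∀ ξ ∈ Sp0 r μ D,
        L2 (fun x => P0 (fun y => (1 + η t y) * ξ y) x - (1 + η t x) * ξ x)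
          ≤ Cs * D.h * L2 ξ) →
      0 < k → k * M = T →
      ∀ n : ℕ, n ≤ M → ∀ eps ∈ Sp r μ D, ∀ e ∈ Sp0 r μ D,
      let Hn := P (η ((n : ℝ) * k))
      let Un := P0 (u ((n : ℝ) * k))
      let rp := rhoPair P P0 Hn Un eps e
      |1 / 3 * (ip eps (P (deriv (rp 2).1))
            + ip (fun x => (1 + Hn x) * e x) (P0 (deriv (rp 2).2)))
          + ip (P (deriv (rp 0).1)) (P (deriv (rp 1).1))
          + ip (fun x => (1 + Hn x) * P0 (deriv (rp 0).2) x) (P0 (deriv (rp 1).2))|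
        ≤ C / D.h ^ 2 * ((L2 eps) ^ 2 + (L2 e) ^ 2) := by
  obtain ⟨hηsm, husm, -, -, hubc, -⟩ := hsol
  obtain ⟨Kη, hKη0, hKη⟩ := slice_bounds (Function.uncurry η) hηsm T r
  obtain ⟨Ku, hKu0, hKu⟩ := slice_bounds (Function.uncurry u) husm T r
  obtain ⟨CM, hCM0, hMk⟩ := markov (r - 1)
  have hc1 : (0:ℝ) < 1/c := by positivity
  set Xη : ℝ := |Cp| * (1/c)^(r-1) * ((r+1) * Kη) with hXη
  set Xu : ℝ := |Cp| * (1/c)^(r-1) * ((r+1) * Ku) with hXu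
  have hXη0 : 0 ≤ Xη := by rw [hXη]; positivity
  have hXu0 : 0 ≤ Xu := by rw [hXu]; positivity
  set KB : ℝ := (Kη + Xη * (1/c)) + CM / c * (Xη + Kη)
      + ((Ku + Xu * (1/c)) + CM / c * (Xu + Ku)) with hKB
  have hKB0 : 0 ≤ KB := by rw [hKB]; positivity
  set Ks : ℝ := Xη + |Cs| with hKs
  have hKs0 : 0 ≤ Ks := by rw [hKs]; positivity
  refine ⟨16 * ((1+KB)^2 * (2*(1+KB)*(1/c + |Ci|))^2 + Ks*(2*(1+KB)*(1/c + |Ci|))^3 + 1), ?_⟩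
  intro D P P0 k M hP hP0 hinvP hinvP0 hPb hP0b hsupra hk hkM n hn eps heps e he
  intro Hn Un rp
  have hh : 0 < D.h := D.h_pos
  have hch1 : c * D.h ≤ 1 := by
    have hq := D.quasi 0
    have m1 := disc_pt_mem (D := D) ((0 : Fin (D.N+1)).succ)
    have m2 := disc_pt_mem (D := D) ((0 : Fin (D.N+1)).castSucc)
    have := m1.2; have := m2.1
    linarith
  have hhc : D.h ≤ 1/c := by
    rw [le_div_iff₀ hc]
    linarith
  set t : ℝ := (n : ℝ) * k with htdef
  have ht : t ∈ Icc (0:ℝ) T := by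
    constructor
    · rw [htdef]; positivity
    · rw [htdef]
      have hnM : (n:ℝ) ≤ (M:ℝ) := Nat.cast_le.2 hn
      calc (n:ℝ) * k ≤ (M:ℝ) * k := mul_le_mul_of_nonneg_right hnM hk.le
        _ = T := by rw [mul_comm]; exact hkM
  -- smoothness of the slices
  have hηt_sm : ContDiff ℝ (⊤ : ℕ∞) (η t) := hηsm.comp (contDiff_const.prodMk contDiff_id)
  have hut_sm : ContDiff ℝ (⊤ : ℕ∞) (u t) := husm.comp (contDiff_const.prodMk contDiff_id)
  have hηtC : ContDiffOn ℝ r (η t) (Icc 0 1) := (hηt_sm.of_le (by exact_mod_cast le_top)).contDiffOn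
  have hutC : ContDiffOn ℝ r (u t) (Icc 0 1) := (hut_sm.of_le (by exact_mod_cast le_top)).contDiffOn
  have hKη' : ∀ j ≤ r, ∀ x ∈ Icc (0:ℝ) 1, |iteratedDeriv j (η t) x| ≤ Kη :=
    fun j hj x hx => hKη t ht j hj x hx
  have hKu' : ∀ j ≤ r, ∀ x ∈ Icc (0:ℝ) 1, |iteratedDeriv j (u t) x| ≤ Ku :=
    fun j hj x hx => hKu t ht j hj x hx
  -- Winf bounds
  have hWη : Winf r (η t) ≤ ((r:ℝ)+1) * Kη := by
    rw [Winf]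
    calc ∑ j ∈ Finset.range (r+1), Linf (iteratedDeriv j (η t))
        ≤ ∑ j ∈ Finset.range (r+1), Kη := Finset.sum_le_sum fun j hj =>
          Linf_le (fun x hx => hKη' j (by simpa [Nat.lt_succ_iff] using hj) x hx)
      _ = ((r:ℝ)+1) * Kη := by
          rw [Finset.sum_const, Finset.card_range]
          push_cast [nsmul_eq_mul]
          ring
  have hWη0 : 0 ≤ Winf r (η t) := Winf_nonneg (hηtC.continuousOn) fun j hj =>
    ⟨Kη, fun y hy => by obtain ⟨z, hz, rfl⟩ := hy; exact hKη' j hj z hz⟩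
  have hWu : Winf r (u t) ≤ ((r:ℝ)+1) * Ku := by
    rw [Winf]
    calc ∑ j ∈ Finset.range (r+1), Linf (iteratedDeriv j (u t))
        ≤ ∑ j ∈ Finset.range (r+1), Ku := Finset.sum_le_sum fun j hj =>
          Linf_le (fun x hx => hKu' j (by simpa [Nat.lt_succ_iff] using hj) x hx)
      _ = ((r:ℝ)+1) * Ku := by
          rw [Finset.sum_const, Finset.card_range]
          push_cast [nsmul_eq_mul]
          ring
  have hWu0 : 0 ≤ Winf r (u t) := Winf_nonneg (hutC.continuousOn) fun j hj =>
    ⟨Ku, fun y hy => by obtain ⟨z, hz, rfl⟩ := hy; exact hKu' j hj z hz⟩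
  -- mesh powers
  have hpow : D.h ^ r ≤ (1/c)^(r-1) * D.h := by
    have h1 : D.h ^ r = D.h ^ (r-1) * D.h := by
      rw [← pow_succ]
      congr 1
      omega
    rw [h1]
    exact mul_le_mul_of_nonneg_right (pow_le_pow_left₀ hh.le hhc (r-1)) hh.le
  -- projection errors, pointwise
  have hprojη := hPb.2.2 (η t) hηtC
  have hδη0 : 0 ≤ Cp * D.h ^ r * Winf r (η t) := by
    refine (abs_nonneg (P (η t) 0 - η t 0)).trans ?_
    refine le_trans ?_ hprojη
    exact le_Linf (((sp_reg hμ1 (hP.1 (η t))).cont).sub hηtC.continuousOn)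
      ⟨le_refl 0, zero_le_one⟩
  have hδη : Cp * D.h ^ r * Winf r (η t) ≤ Xη * D.h := by
    calc Cp * D.h ^ r * Winf r (η t) ≤ |Cp| * D.h ^ r * Winf r (η t) := by
          refine mul_le_mul_of_nonneg_right (mul_le_mul_of_nonneg_right (le_abs_self Cp)
            (by positivity)) hWη0
      _ ≤ |Cp| * ((1/c)^(r-1) * D.h) * (((r:ℝ)+1) * Kη) := by
          refine mul_le_mul (mul_le_mul_of_nonneg_left hpow (abs_nonneg Cp)) hWη hWη0 ?_
          positivity
      _ = Xη * D.h := by rw [hXη]; push_cast; ring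
  have hHηx : ∀ x ∈ Icc (0:ℝ) 1, |Hn x - η t x| ≤ Cp * D.h ^ r * Winf r (η t) := by
    intro x hx
    exact (le_Linf (((sp_reg hμ1 (hP.1 (η t))).cont).sub hηtC.continuousOn) hx).trans hprojη
  have hu0 : u t 0 = 0 := (hubc t ht).1
  have hu1 : u t 1 = 0 := (hubc t ht).2
  have hproju := hP0b.2.2 (u t) hutC hu0 hu1
  have hδu0 : 0 ≤ Cp * D.h ^ r * Winf r (u t) := by
    refine (abs_nonneg (P0 (u t) 0 - u t 0)).trans ?_
    refine le_trans ?_ hproju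
    exact le_Linf (((sp0_reg hμ1 (hP0.1 (u t))).cont).sub hutC.continuousOn)
      ⟨le_refl 0, zero_le_one⟩
  have hδu : Cp * D.h ^ r * Winf r (u t) ≤ Xu * D.h := by
    calc Cp * D.h ^ r * Winf r (u t) ≤ |Cp| * D.h ^ r * Winf r (u t) := by
          refine mul_le_mul_of_nonneg_right (mul_le_mul_of_nonneg_right (le_abs_self Cp)
            (by positivity)) hWu0
      _ ≤ |Cp| * ((1/c)^(r-1) * D.h) * (((r:ℝ)+1) * Ku) := by
          refine mul_le_mul (mul_le_mul_of_nonneg_left hpow (abs_nonneg Cp)) hWu hWu0 ?_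
          positivity
      _ = Xu * D.h := by rw [hXu]; push_cast; ring
  have hUux : ∀ x ∈ Icc (0:ℝ) 1, |Un x - u t x| ≤ Cp * D.h ^ r * Winf r (u t) := by
    intro x hx
    exact (le_Linf (((sp0_reg hμ1 (hP0.1 (u t))).cont).sub hutC.continuousOn) hx).trans hproju
  -- sup bounds for Hn, Un
  have hHb : ∀ x ∈ Icc (0:ℝ) 1, |Hn x| ≤ KB := by
    intro x hx
    have h1 : |Hn x| ≤ |η t x| + |Hn x - η t x| := by
      have := abs_add_le (η t x) (Hn x - η t x)
      simpa using this
    have h2 : |η t x| ≤ Kη := by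
      have := hKη' 0 (by omega) x hx
      simpa [iteratedDeriv_zero] using this
    have h3 : |Hn x - η t x| ≤ Xη * (1/c) := by
      refine ((hHηx x hx).trans hδη).trans ?_
      exact mul_le_mul_of_nonneg_left hhc hXη0
    rw [hKB]
    have hrest : 0 ≤ CM / c * (Xη + Kη) + ((Ku + Xu * (1/c)) + CM / c * (Xu + Ku)) := by
      positivity
    linarith
  have hUb : ∀ x ∈ Icc (0:ℝ) 1, |Un x| ≤ KB := by
    intro x hx
    have h1 : |Un x| ≤ |u t x| + |Un x - u t x| := by
      have := abs_add_le (u t x) (Un x - u t x)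
      simpa using this
    have h2 : |u t x| ≤ Ku := by
      have := hKu' 0 (by omega) x hx
      simpa [iteratedDeriv_zero] using this
    have h3 : |Un x - u t x| ≤ Xu * (1/c) := by
      refine ((hUux x hx).trans hδu).trans ?_
      exact mul_le_mul_of_nonneg_left hhc hXu0
    rw [hKB]
    have hrest : 0 ≤ (Kη + Xη * (1/c)) + CM / c * (Xη + Kη) + CM / c * (Xu + Ku) := by
      positivity
    linarith
  -- Lipschitz bounds for the slices
  have hLipη : ∀ x ∈ Icc (0:ℝ) 1, ∀ y ∈ Icc (0:ℝ) 1, |η t x - η t y| ≤ Kη * |x - y| := by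
    intro x hx y hy
    have hdb : ∀ z ∈ Icc (0:ℝ) 1, ‖deriv (η t) z‖ ≤ Kη := by
      intro z hz
      rw [Real.norm_eq_abs, ← iteratedDeriv_one]
      exact hKη' 1 (by omega) z hz
    have := Convex.norm_image_sub_le_of_norm_deriv_le
      (fun z _ => (hηt_sm.differentiable (by simp)) z) hdb (convex_Icc 0 1) hy hx
    simpa [Real.norm_eq_abs] using this
  have hLipu : ∀ x ∈ Icc (0:ℝ) 1, ∀ y ∈ Icc (0:ℝ) 1, |u t x - u t y| ≤ Ku * |x - y| := by
    intro x hx y hy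
    have hdb : ∀ z ∈ Icc (0:ℝ) 1, ‖deriv (u t) z‖ ≤ Ku := by
      intro z hz
      rw [Real.norm_eq_abs, ← iteratedDeriv_one]
      exact hKu' 1 (by omega) z hz
    have := Convex.norm_image_sub_le_of_norm_deriv_le
      (fun z _ => (hut_sm.differentiable (by simp)) z) hdb (convex_Icc 0 1) hy hx
    simpa [Real.norm_eq_abs] using this
  -- derivative bounds for Hn, Un (Markov)
  have hHd : ∀ x ∈ Ioo (0:ℝ) 1 \ Set.range D.pt, |deriv Hn x| ≤ KB := by
    intro x hx
    have h0 := sp_deriv_bound hMk hCM0 hc (hP.1 (η t)) hKη0 hδη0 hLipη hHηx x hx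
    refine h0.trans ?_
    have h1 : Cp * D.h ^ r * Winf r (η t) + Kη * D.h ≤ (Xη + Kη) * D.h := by
      have hx1 : (Xη + Kη) * D.h = Xη * D.h + Kη * D.h := by ring
      linarith only [hδη, hx1]
    have h2 : CM / (c * D.h) * (Cp * D.h ^ r * Winf r (η t) + Kη * D.h)
        ≤ CM / (c * D.h) * ((Xη + Kη) * D.h) := by
      refine mul_le_mul_of_nonneg_left h1 ?_
      positivity
    refine h2.trans ?_
    have h3 : CM / (c * D.h) * ((Xη + Kη) * D.h) = CM / c * (Xη + Kη) := by
      field_simp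
    rw [h3, hKB]
    have hrest : 0 ≤ (Kη + Xη * (1/c)) + ((Ku + Xu * (1/c)) + CM / c * (Xu + Ku)) := by
      positivity
    linarith
  have hUd : ∀ x ∈ Ioo (0:ℝ) 1 \ Set.range D.pt, |deriv Un x| ≤ KB := by
    intro x hx
    have h0 := sp_deriv_bound hMk hCM0 hc (hP0.1 (u t)).1 hKu0 hδu0 hLipu hUux x hx
    refine h0.trans ?_
    have h1 : Cp * D.h ^ r * Winf r (u t) + Ku * D.h ≤ (Xu + Ku) * D.h := by
      have hx1 : (Xu + Ku) * D.h = Xu * D.h + Ku * D.h := by ring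
      linarith only [hδu, hx1]
    have h2 : CM / (c * D.h) * (Cp * D.h ^ r * Winf r (u t) + Ku * D.h)
        ≤ CM / (c * D.h) * ((Xu + Ku) * D.h) := by
      refine mul_le_mul_of_nonneg_left h1 ?_
      positivity
    refine h2.trans ?_
    have h3 : CM / (c * D.h) * ((Xu + Ku) * D.h) = CM / c * (Xu + Ku) := by
      field_simp
    rw [h3, hKB]
    have hrest : 0 ≤ (Kη + Xη * (1/c)) + CM / c * (Xη + Kη) + (Ku + Xu * (1/c)) := by
      positivity
    linarith
  -- superapproximation transfer
  have snb0 : ∀ f ∈ Sp0 r μ D, Nb f := fun f hf => (sp0_reg hμ1 hf).nb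
  have hsup : ∀ ξ ∈ Sp0 r μ D,
      L2 (fun x => (1 + Hn x) * ξ x - P0 (fun y => (1 + Hn y) * ξ y) x)
        ≤ Ks * D.h * L2 ξ := by
    intro ξ hξ
    have rξ : Reg ξ := sp0_reg hμ1 hξ
    have rηt : Reg (η t) := by
      refine ⟨hηt_sm.continuous.continuousOn,
        fun x _ => (hηt_sm.differentiable (by simp)) x, Kη, ?_⟩
      intro x hx
      rw [← iteratedDeriv_one]
      exact hKη' 1 (by omega) x (Ioo_subset_Icc_self hx)
    have rgξ : Reg (fun y => (1 + η t y) * ξ y) := ((Reg.const 1).add rηt).mul rξ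
    have rHn : Reg Hn := sp_reg hμ1 (hP.1 (η t))
    have rωξ : Reg (fun y => (1 + Hn y) * ξ y) := ((Reg.const 1).add rHn).mul rξ
    have hbest : L2 (fun x => (1 + Hn x) * ξ x - P0 (fun y => (1 + Hn y) * ξ y) x)
        ≤ L2 (fun x => (1 + Hn x) * ξ x - P0 (fun y => (1 + η t y) * ξ y) x) :=
      proj_best hP0 snb0 (fun f hf g hg => sp0_sub hf hg) rωξ.nb
        (hP0.1 (fun y => (1 + η t y) * ξ y))
    refine hbest.trans ?_
    have hsplit : L2 (fun x => (1 + Hn x) * ξ x - P0 (fun y => (1 + η t y) * ξ y) x)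
        ≤ L2 (fun x => (Hn x - η t x) * ξ x)
          + L2 (fun x => (1 + η t x) * ξ x - P0 (fun y => (1 + η t y) * ξ y) x) := by
      have hptw : ∀ x ∈ Ioo (0:ℝ) 1 \ (∅ : Set ℝ),
          (1 + Hn x) * ξ x - P0 (fun y => (1 + η t y) * ξ y) x
            = (Hn x - η t x) * ξ x
              + ((1 + η t x) * ξ x - P0 (fun y => (1 + η t y) * ξ y) x) := by
        intros x _
        ring
      rw [L2_congr' ∅ countable_empty hptw]
      exact L2_add_le ((rHn.nb.sub rηt.nb).mul rξ.nb)
        (rgξ.nb.sub (snb0 _ (hP0.1 (fun y => (1 + η t y) * ξ y))))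
    refine hsplit.trans ?_
    have h1 : L2 (fun x => (Hn x - η t x) * ξ x) ≤ Xη * D.h * L2 ξ := by
      refine (L2_weight_le (rHn.nb.sub rηt.nb) rξ.nb (Xη * D.h)
        (by positivity) ∅ countable_empty ?_).trans ?_
      · intro x hx
        exact ((hHηx x (Ioo_subset_Icc_self hx.1)).trans hδη)
      · exact le_refl _
    have h2 : L2 (fun x => (1 + η t x) * ξ x - P0 (fun y => (1 + η t y) * ξ y) x)
        ≤ |Cs| * D.h * L2 ξ := by
      rw [L2_sub_comm]
      refine (hsupra t ht ξ hξ).trans ?_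
      refine mul_le_mul_of_nonneg_right ?_ (L2_nonneg ξ)
      exact mul_le_mul_of_nonneg_right (le_abs_self Cs) hh.le
    rw [hKs]
    have hgoal : Xη * D.h * L2 ξ + |Cs| * D.h * L2 ξ = (Xη + |Cs|) * D.h * L2 ξ := by ring
    linarith
  exact core hμ1 hc hP hP0 (abs_nonneg Ci) (inv_form hinvP) (inv_form hinvP0)
    (hP.1 (η t)) (hP0.1 (u t)) hKB0 hHb hUb hHd hUd hKs0 hsup heps he
/-- The estimate (4.48) for `β₃ⁿ`:
`|(1/3)[(εⁿ, Pρₓ^{n,2}) + ((1+Hⁿ)eⁿ, P₀rₓ^{n,2})] + (Pρₓⁿ, Pρₓ^{n,1})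
   + ((1+Hⁿ)P₀rₓⁿ, P₀rₓ^{n,1})| ≤ (C/h²) (‖εⁿ‖² + ‖eⁿ‖²)`. -/
theorem stmt18 (r μ : ℕ) (hr : 3 ≤ r) (hμ1 : 1 ≤ μ) (hμ2 : μ ≤ r - 2)
    (c Ci Cp Cs T α : ℝ) (hc : 0 < c) (hT : 0 < T) (hα : 0 < α)
    (η u : ℝ → ℝ → ℝ) (hsol : SWSolution T α η u) :
    ∃ C : ℝ, ∀ (D : Disc c) (P P0 : (ℝ → ℝ) → (ℝ → ℝ)) (k : ℝ) (M : ℕ),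
      IsL2Proj (Sp r μ D) P → IsL2Proj (Sp0 r μ D) P0 →
      InvIneq (Sp r μ D) μ D.h Ci → InvIneq (Sp0 r μ D) μ D.h Ci →
      ProjBounds P r D.h Cp → ProjBounds0 P0 r D.h Cp →
      (∀ t ∈ Icc (0:ℝ) T, ∀ ξ ∈ Sp0 r μ D,
        L2 (fun x => P0 (fun y => (1 + η t y) * ξ y) x - (1 + η t x) * ξ x)
          ≤ Cs * D.h * L2 ξ) →
      0 < k → k * M = T →
      ∀ n : ℕ, n ≤ M → ∀ eps ∈ Sp r μ D, ∀ e ∈ Sp0 r μ D,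
      let Hn := P (η ((n : ℝ) * k))
      let Un := P0 (u ((n : ℝ) * k))
      let rp := rhoPair P P0 Hn Un eps e
      |1 / 3 * (ip eps (P (deriv (rp 2).1))
            + ip (fun x => (1 + Hn x) * e x) (P0 (deriv (rp 2).2)))
          + ip (P (deriv (rp 0).1)) (P (deriv (rp 1).1))
          + ip (fun x => (1 + Hn x) * P0 (deriv (rp 0).2) x) (P0 (deriv (rp 1).2))|
        ≤ C / D.h ^ 2 * ((L2 eps) ^ 2 + (L2 e) ^ 2) := by
  exact stmt18' r μ hr hμ1 hμ2 c Ci Cp Cs T α hc hT hα η u hsol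

end
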